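/- arXiv:1007.2960 — 8 statements merged into one kernel-verified Lean document; each statement's English description precedes it below -/
import Mathlib

section
/- Let n ≥ 2 and let c : ℝ → EuclideanSpace ℝ (Fin n) be a smooth strongly regular curve. Let e₁(t),…,e_n(t) be the Gram–Schmidt orthonormalization of c'(t),…,c^{(n)}(t). Then for every t, ⟨e_{n−1}'(t), e_n(t)⟩ = vol(c'(t),…,c^{(n−2)}(t)) · |det(c'(t),…,c^{(n)}(t))| / vol(c'(t),…,c^{(n−1)}(t))²; equivalently, the absolute value of the torsion satisfies |κ_{n−1}(t)| = vol(c'(t),…,c^{(n−2)}(t)) · |det(c'(t),…,c^{(n)}(t))| / (vol(c'(t),…,c^{(n−1)}(t))² · ‖c'(t)‖). -/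
open scoped RealInnerProductSpace

/-- The `k`-dimensional volume of the parallelepiped spanned by the first `k`
vectors of the family `v`: the square root of the Gram determinant.
By convention the volume of the empty family is `1`. -/
noncomputable def gvol {E : Type*} [NormedAddCommGroup E] [InnerProductSpace ℝ E]
    (k : ℕ) (v : ℕ → E) : ℝ :=
  Real.sqrt (Matrix.det (Matrix.of fun i j : Fin k => ⟪v i, v j⟫))

/-- `detFam n v` is the determinant of the `n × n` matrix whose columns are the
coordinates of the first `n` vectors of the family `v` in the standard basis of
`EuclideanSpace ℝ (Fin n)`. -/
noncomputable def detFam (n : ℕ) (v : ℕ → EuclideanSpace ℝ (Fin n)) : ℝ :=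
  (Matrix.of fun i j : Fin n => v j i).det

/-- The family of iterated derivatives `c'(t), c''(t), …` of a curve `c`;
`curveDerivs c t i = c^{(i+1)}(t)`. -/
noncomputable def curveDerivs {n : ℕ} (c : ℝ → EuclideanSpace ℝ (Fin n)) (t : ℝ) :
    ℕ → EuclideanSpace ℝ (Fin n) :=
  fun i => iteratedDeriv (i + 1) c t

/-- The Frenet–Serret frame of a curve `c`: the Gram–Schmidt orthonormalization of
its iterated derivatives.  Here `frenetFrame c r t` is the `(r+1)`-st frame vector
`e_{r+1}(t)` (so `frenetFrame c 0 = e₁`). -/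
noncomputable def frenetFrame {n : ℕ} (c : ℝ → EuclideanSpace ℝ (Fin n)) (r : ℕ) (t : ℝ) :
    EuclideanSpace ℝ (Fin n) :=
  InnerProductSpace.gramSchmidtNormed ℝ (curveDerivs c t) r

open InnerProductSpace

section helpers
variable {F : Type*} [NormedAddCommGroup F] [InnerProductSpace ℝ F]

lemma inner_gs_self (f : ℕ → F) (j : ℕ) :
    ⟪gramSchmidt ℝ f j, f j⟫ = ‖gramSchmidt ℝ f j‖ ^ 2 := by
  conv_lhs => rw [gramSchmidt_def'' ℝ f j]
  rw [inner_add_right, real_inner_self_eq_norm_sq, inner_sum, Finset.sum_eq_zero, add_zero]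
  intro i hi
  rw [inner_smul_right, gramSchmidt_orthogonal ℝ f (Finset.mem_Iio.1 hi).ne', mul_zero]


lemma gram_det_eq_prod (f : ℕ → F) (k : ℕ) :
    (Matrix.of fun i j : Fin k => ⟪f i, f j⟫).det
      = ∏ i : Fin k, ‖gramSchmidt ℝ f (i : ℕ)‖ ^ 2 := by
  set u : ℕ → F := gramSchmidt ℝ f with hu
  set B : ℕ → ℕ → ℝ := fun p i =>
    if i = p then 1 else if i < p then ⟪u i, f p⟫ / (‖u i‖ : ℝ) ^ 2 else 0 with hB
  set A : Matrix (Fin k) (Fin k) ℝ := Matrix.of fun p i : Fin k => B (p : ℕ) (i : ℕ) with hA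
  have hrep : ∀ p : Fin k, f p = ∑ i : Fin k, A p i • u (i : ℕ) := by
    intro p
    have e1 : (∑ i : Fin k, A p i • u (i : ℕ))
        = ∑ i ∈ Finset.range k, B (p : ℕ) i • u i :=
      Fin.sum_univ_eq_sum_range (fun i => B (p : ℕ) i • u i) k
    have hsub : Finset.Iic (p : ℕ) ⊆ Finset.range k := by
      intro x hx
      simp only [Finset.mem_Iic] at hx
      exact Finset.mem_range.2 (lt_of_le_of_lt hx p.2)
    have e2 : (∑ i ∈ Finset.Iic (p : ℕ), B (p : ℕ) i • u i)
        = ∑ i ∈ Finset.range k, B (p : ℕ) i • u i := by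
      refine Finset.sum_subset hsub fun x _ hx => ?_
      simp only [Finset.mem_Iic, not_le] at hx
      have hz : B (p : ℕ) x = 0 := by
        simp only [hB]
        rw [if_neg (by omega), if_neg (by omega)]
      rw [hz, zero_smul]
    rw [e1, ← e2, ← Finset.Iio_insert, Finset.sum_insert (by simp)]
    have hBpp : B (p : ℕ) (p : ℕ) = 1 := by simp [hB]
    rw [hBpp, one_smul]
    have e3 : ∀ i ∈ Finset.Iio (p : ℕ), B (p : ℕ) i • u i
        = (⟪u i, f p⟫ / (‖u i‖ : ℝ) ^ 2) • u i := by
      intro i hi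
      rw [Finset.mem_Iio] at hi
      simp only [hB]
      rw [if_neg (by omega), if_pos hi]
    rw [Finset.sum_congr rfl e3]
    exact gramSchmidt_def'' ℝ f (p : ℕ)
  have hG : (Matrix.of fun i j : Fin k => ⟪f i, f j⟫)
      = A * Matrix.diagonal (fun i : Fin k => ‖u (i : ℕ)‖ ^ 2) * A.transpose := by
    ext p q
    rw [Matrix.mul_apply]
    simp only [Matrix.mul_diagonal, Matrix.transpose_apply, Matrix.of_apply]
    rw [hrep p, hrep q, sum_inner]
    refine Finset.sum_congr rfl fun i _ => ?_
    rw [inner_sum, Finset.sum_eq_single i]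
    · rw [real_inner_smul_left, real_inner_smul_right, real_inner_self_eq_norm_sq]
      ring
    · intro b _ hb
      rw [real_inner_smul_left, real_inner_smul_right,
        gramSchmidt_orthogonal ℝ f (fun h => hb (Fin.val_injective h).symm)]
      ring
    · intro h
      exact absurd (Finset.mem_univ i) h
  have hAdet : A.det = 1 := by
    have htri : A.BlockTriangular OrderDual.toDual := by
      intro i j hij
      have hji : (j : ℕ) > (i : ℕ) := hij
      simp only [hA, Matrix.of_apply, hB]
      rw [if_neg (by omega), if_neg (by omega)]
    rw [Matrix.det_of_lowerTriangular A htri]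
    have hdiag : ∀ i : Fin k, A i i = 1 := fun i => by simp [hA, hB]
    simp [hdiag]
  rw [hG, Matrix.det_mul, Matrix.det_mul, Matrix.det_transpose, hAdet,
    Matrix.det_diagonal]
  ring

lemma gvol_eq_prod (f : ℕ → F) (k : ℕ) :
    gvol k f = ∏ i : Fin k, ‖gramSchmidt ℝ f (i : ℕ)‖ := by
  rw [gvol, gram_det_eq_prod, Finset.prod_pow,
    Real.sqrt_sq (Finset.prod_nonneg fun i _ => norm_nonneg _)]

end helpers

lemma gvol_eq_abs_detFam (n : ℕ) (v : ℕ → EuclideanSpace ℝ (Fin n)) :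
    gvol n v = |detFam n v| := by
  have h : (Matrix.of fun i j : Fin n => ⟪v i, v j⟫)
      = (Matrix.of fun i j : Fin n => v j i).transpose * (Matrix.of fun i j : Fin n => v j i) := by
    ext p q
    rw [Matrix.mul_apply, Matrix.of_apply, PiLp.inner_apply]
    refine Finset.sum_congr rfl fun x _ => ?_
    simp [Matrix.transpose_apply, RCLike.inner_apply, starRingEnd_apply, mul_comm]
  rw [gvol, h, Matrix.det_mul, Matrix.det_transpose, detFam, ← sq, Real.sqrt_sq_eq_abs]


/-- **Theorem 5.1, part 2, of the paper (for strongly regular curves).**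
For a smooth strongly regular curve `c` in `ℝⁿ` (`n ≥ 2`), with `e₁, …, e_n` the
Gram–Schmidt orthonormalization of `c', …, c^{(n)}`:
`⟪e_{n-1}'(t), e_n(t)⟫ = vol(c',…,c^{(n-2)}) · |det(c',…,c^{(n)})| / vol(c',…,c^{(n-1)})²`,
equivalently the absolute value of the torsion
`|κ_{n-1}(t)| = |⟪e_{n-1}'(t), e_n(t)⟫| / ‖c'(t)‖` satisfies
`|κ_{n-1}(t)| = vol(c',…,c^{(n-2)}) · |det(c',…,c^{(n)})| / (vol(c',…,c^{(n-1)})² · ‖c'(t)‖)`. -/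
theorem torsion_abs_eq_vol_det_ratio
    (n : ℕ) (hn : 2 ≤ n) (c : ℝ → EuclideanSpace ℝ (Fin n))
    (hc : ContDiff ℝ (⊤ : ℕ∞) c)
    (hreg : ∀ t, LinearIndependent ℝ (fun i : Fin n => iteratedDeriv (i + 1) c t)) :
    ∀ t : ℝ,
      ⟪deriv (frenetFrame c (n - 2)) t, frenetFrame c (n - 1) t⟫
          = gvol (n - 2) (curveDerivs c t) * |detFam n (curveDerivs c t)|
              / (gvol (n - 1) (curveDerivs c t)) ^ 2
      ∧ |⟪deriv (frenetFrame c (n - 2)) t, frenetFrame c (n - 1) t⟫| / ‖deriv c t‖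
          = gvol (n - 2) (curveDerivs c t) * |detFam n (curveDerivs c t)|
              / ((gvol (n - 1) (curveDerivs c t)) ^ 2 * ‖deriv c t‖) := by
  obtain ⟨m, rfl⟩ : ∃ m, n = m + 2 := ⟨n - 2, by omega⟩
  intro t₀
  have hm2 : m + 2 - 2 = m := by omega
  have hm1 : m + 2 - 1 = m + 1 := by omega
  rw [hm2, hm1]
  -- derivatives of the iterated-derivative family
  have hv : ∀ (i : ℕ) (t : ℝ),
      HasDerivAt (fun s => curveDerivs c s i) (curveDerivs c t (i + 1)) t := by
    intro i t
    have hd : Differentiable ℝ (iteratedDeriv (i + 1) c) :=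
      hc.differentiable_iteratedDeriv (i + 1) (by exact_mod_cast WithTop.coe_lt_top _)
    have h1 := (hd t).hasDerivAt
    rwa [← iteratedDeriv_succ] at h1
  -- linear independence of initial segments
  have hli : ∀ (t : ℝ) (i : ℕ), i < m + 2 →
      LinearIndependent ℝ (curveDerivs c t ∘ ((↑) : Set.Iic i → ℕ)) := by
    intro t i hi
    exact (hreg t).comp (fun j : Set.Iic i => (⟨j.1, lt_of_le_of_lt j.2 hi⟩ : Fin (m + 2)))
      (fun a b hab => Subtype.ext (by simpa using congrArg Fin.val hab))
  have hune : ∀ (t : ℝ) (i : ℕ), i < m + 2 → gramSchmidt ℝ (curveDerivs c t) i ≠ 0 :=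
    fun t i hi => gramSchmidt_ne_zero_coe i (hli t i hi)
  -- key induction: differentiability of the Gram-Schmidt vectors
  have key : ∀ j, j < m + 2 → ∃ z ∈ Submodule.span ℝ (curveDerivs c t₀ '' Set.Iic j),
      HasDerivAt (fun s => gramSchmidt ℝ (curveDerivs c s) j)
        (curveDerivs c t₀ (j + 1) + z) t₀ := by
    intro j
    induction j using Nat.strong_induction_on with
    | _ j ih =>
      intro hj
      have hfun : (fun s => gramSchmidt ℝ (curveDerivs c s) j)
          = fun s => curveDerivs c s j - ∑ i ∈ Finset.Iio j,
              (⟪gramSchmidt ℝ (curveDerivs c s) i, curveDerivs c s j⟫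
                / ⟪gramSchmidt ℝ (curveDerivs c s) i, gramSchmidt ℝ (curveDerivs c s) i⟫)
                • gramSchmidt ℝ (curveDerivs c s) i := by
        funext s
        rw [gramSchmidt_def ℝ (curveDerivs c s) j]
        congr 1
        refine Finset.sum_congr rfl fun i _ => ?_
        rw [Submodule.starProjection_singleton, real_inner_self_eq_norm_sq]
        norm_num
      have H : ∀ i : ℕ, i < j → ∃ z ∈ Submodule.span ℝ (curveDerivs c t₀ '' Set.Iic i),
          HasDerivAt (fun s => gramSchmidt ℝ (curveDerivs c s) i)
            (curveDerivs c t₀ (i + 1) + z) t₀ := fun i hi => ih i hi (hi.trans hj)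
      choose! z hzmem hzderiv using H
      have hterm : ∀ i ∈ Finset.Iio j, ∃ D ∈ Submodule.span ℝ (curveDerivs c t₀ '' Set.Iic j),
          HasDerivAt (fun s =>
            (⟪gramSchmidt ℝ (curveDerivs c s) i, curveDerivs c s j⟫
              / ⟪gramSchmidt ℝ (curveDerivs c s) i, gramSchmidt ℝ (curveDerivs c s) i⟫)
              • gramSchmidt ℝ (curveDerivs c s) i) D t₀ := by
        intro i hi
        rw [Finset.mem_Iio] at hi
        have hui := hzderiv i hi
        have hvj := hv j t₀
        have h1 := HasDerivAt.inner ℝ hui hvj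
        have h2 := HasDerivAt.inner ℝ hui hui
        have hne0 : ⟪gramSchmidt ℝ (curveDerivs c t₀) i, gramSchmidt ℝ (curveDerivs c t₀) i⟫
            ≠ (0:ℝ) := inner_self_ne_zero.2 (hune t₀ i (hi.trans hj))
        refine ⟨_, ?_, HasDerivAt.smul (h1.div h2 hne0) hui⟩
        refine Submodule.add_mem _ (Submodule.smul_mem _ _ ?_) (Submodule.smul_mem _ _ ?_)
        · exact Submodule.add_mem _
            (Submodule.subset_span (Set.mem_image_of_mem _ (Set.mem_Iic.mpr (by omega))))
            (Submodule.span_mono (Set.image_mono (Set.Iic_subset_Iic.mpr hi.le))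
              (hzmem i hi))
        · exact Submodule.span_mono (Set.image_mono (Set.Iic_subset_Iic.mpr hi.le))
            (gramSchmidt_mem_span ℝ _ le_rfl)
      choose! D hDmem hD using hterm
      have hsum := HasDerivAt.sum hD
      have hmain := (hv j t₀).sub hsum
      refine ⟨-∑ i ∈ Finset.Iio j, D i,
        Submodule.neg_mem _ (Submodule.sum_mem _ fun i hi => hDmem i hi), ?_⟩
      rw [← sub_eq_add_neg, hfun]
      refine hmain.congr_of_eventuallyEq (Filter.Eventually.of_forall fun s => ?_)
      simp only [Pi.sub_apply, Finset.sum_apply]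
  -- notation
  set u : ℝ → ℕ → EuclideanSpace ℝ (Fin (m + 2)) :=
    fun s => gramSchmidt ℝ (curveDerivs c s) with huu
  obtain ⟨z, hzmem, hz⟩ := key m (by omega)
  have hum : u t₀ m ≠ 0 := hune t₀ m (by omega)
  have hum1 : u t₀ (m + 1) ≠ 0 := hune t₀ (m + 1) (by omega)
  -- orthogonality of u (m+1) to the span
  have horth : ∀ x ∈ Submodule.span ℝ (curveDerivs c t₀ '' Set.Iic m),
      ⟪x, u t₀ (m + 1)⟫ = 0 := by
    intro x hx
    rw [← span_gramSchmidt_Iic ℝ (curveDerivs c t₀) m] at hx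
    induction hx using Submodule.span_induction with
    | mem y hy =>
      obtain ⟨i, hi, rfl⟩ := hy
      exact gramSchmidt_orthogonal ℝ _ (by simp only [Set.mem_Iic] at hi; omega)
    | zero => exact inner_zero_left _
    | add a b _ _ ha hb => rw [inner_add_left, ha, hb, add_zero]
    | smul r a _ ha => rw [real_inner_smul_left, ha, mul_zero]
  have hz_orth : ⟪z, u t₀ (m + 1)⟫ = 0 := horth z hzmem
  have hmm1 : ⟪u t₀ m, u t₀ (m + 1)⟫ = 0 := gramSchmidt_orthogonal ℝ _ (by omega)
  have hvinner : ⟪curveDerivs c t₀ (m + 1), u t₀ (m + 1)⟫ = ‖u t₀ (m + 1)‖ ^ 2 := by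
    rw [real_inner_comm]
    exact inner_gs_self _ _
  -- derivative of the (m)-th frame vector
  have hinv : HasDerivAt (fun s => ‖u s m‖⁻¹)
      (deriv (fun s => ‖u s m‖⁻¹) t₀) t₀ := by
    refine DifferentiableAt.hasDerivAt ?_
    exact (DifferentiableAt.norm ℝ hz.differentiableAt hum).inv (norm_ne_zero_iff.2 hum)
  have hframe : HasDerivAt (frenetFrame c m)
      (‖u t₀ m‖⁻¹ • (curveDerivs c t₀ (m + 1) + z)
        + (deriv (fun s => ‖u s m‖⁻¹) t₀) • u t₀ m) t₀ := hinv.smul hz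
  have hfr1 : frenetFrame c (m + 1) t₀ = ‖u t₀ (m + 1)‖⁻¹ • u t₀ (m + 1) := rfl
  have hLHS : ⟪deriv (frenetFrame c m) t₀, frenetFrame c (m + 1) t₀⟫
      = ‖u t₀ (m + 1)‖ / ‖u t₀ m‖ := by
    rw [hframe.deriv, hfr1]
    have hb : ‖u t₀ (m + 1)‖ ≠ 0 := norm_ne_zero_iff.2 hum1
    rw [inner_add_left, real_inner_smul_left, real_inner_smul_left,
      real_inner_smul_right, real_inner_smul_right, inner_add_left, hmm1, hz_orth, hvinner]
    simp only [mul_zero, add_zero]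
    rw [sq, inv_mul_cancel_left₀ hb, div_eq_inv_mul]
  -- volumes
  have hgv : ∀ k, k ≤ m + 2 → gvol k (curveDerivs c t₀) = ∏ i : Fin k, ‖u t₀ (i : ℕ)‖ :=
    fun k _ => gvol_eq_prod _ k
  have hdet : |detFam (m + 2) (curveDerivs c t₀)| = ∏ i : Fin (m + 2), ‖u t₀ (i : ℕ)‖ := by
    rw [← gvol_eq_abs_detFam, hgv (m + 2) le_rfl]
  have hsplit2 : (∏ i : Fin (m + 2), ‖u t₀ (i : ℕ)‖)
      = (∏ i : Fin m, ‖u t₀ (i : ℕ)‖) * ‖u t₀ m‖ * ‖u t₀ (m + 1)‖ := by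
    rw [Fin.prod_univ_castSucc, Fin.prod_univ_castSucc]
    simp [Fin.val_last]
  have hsplit1 : (∏ i : Fin (m + 1), ‖u t₀ (i : ℕ)‖)
      = (∏ i : Fin m, ‖u t₀ (i : ℕ)‖) * ‖u t₀ m‖ := by
    rw [Fin.prod_univ_castSucc]
    simp [Fin.val_last]
  have hP : (0:ℝ) < ∏ i : Fin m, ‖u t₀ (i : ℕ)‖ := by
    refine Finset.prod_pos fun i _ => norm_pos_iff.2 (hune t₀ i (by omega))
  have ha : (0:ℝ) < ‖u t₀ m‖ := norm_pos_iff.2 hum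
  have hb : (0:ℝ) < ‖u t₀ (m + 1)‖ := norm_pos_iff.2 hum1
  have hRHS : gvol m (curveDerivs c t₀) * |detFam (m + 2) (curveDerivs c t₀)|
      / (gvol (m + 1) (curveDerivs c t₀)) ^ 2 = ‖u t₀ (m + 1)‖ / ‖u t₀ m‖ := by
    rw [hgv m (by omega), hgv (m + 1) (by omega), hdet, hsplit2, hsplit1]
    field_simp
  constructor
  · rw [hLHS, hRHS]
  · rw [hLHS, abs_of_nonneg (div_nonneg hb.le ha.le), ← hRHS, div_div]
end

section
/- Let n ≥ 3 and let c : ℝ → EuclideanSpace ℝ (Fin n) be a smooth regular curve with Frenet–Serret frame e₁(t),…,e_{n−1}(t). Then for every t, ⟨e₁'(t), e₂(t)⟩ = vol(c'(t), c''(t)) / ‖c'(t)‖²; equivalently, the first curvature satisfies κ₁(t) = vol(c'(t), c''(t)) / ‖c'(t)‖³. -/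
open scoped RealInnerProductSpace

lemma gramSchmidt_nat_zero {E : Type*} [NormedAddCommGroup E] [InnerProductSpace ℝ E]
    (f : ℕ → E) : InnerProductSpace.gramSchmidt ℝ f 0 = f 0 := by
  rw [InnerProductSpace.gramSchmidt_def]
  have : Finset.Iio 0 = (∅ : Finset ℕ) := rfl
  simp [this]

lemma gramSchmidt_nat_one {E : Type*} [NormedAddCommGroup E] [InnerProductSpace ℝ E]
    (f : ℕ → E) : InnerProductSpace.gramSchmidt ℝ f 1 = f 1 - (⟪f 0, f 1⟫ / ‖f 0‖ ^ 2) • f 0 := by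
  rw [InnerProductSpace.gramSchmidt_def]
  have : Finset.Iio 1 = {0} := rfl
  rw [this, Finset.sum_singleton, gramSchmidt_nat_zero, Submodule.starProjection_singleton]
  norm_num

/-- **Corollary 6.1 (first formula) of the paper.**  For a smooth regular curve `c`
in `ℝⁿ` (`n ≥ 3`) with Frenet–Serret frame `e₁, …, e_{n-1}`:
`⟪e₁'(t), e₂(t)⟫ = vol(c'(t), c''(t)) / ‖c'(t)‖²`, equivalently the first curvature
`κ₁(t) = ⟪e₁'(t), e₂(t)⟫ / ‖c'(t)‖` satisfies `κ₁(t) = vol(c'(t), c''(t)) / ‖c'(t)‖³`. -/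
theorem first_curvature_eq
    (n : ℕ) (hn : 3 ≤ n) (c : ℝ → EuclideanSpace ℝ (Fin n))
    (hc : ContDiff ℝ (⊤ : ℕ∞) c)
    (hreg : ∀ t, LinearIndependent ℝ (fun i : Fin (n - 1) => iteratedDeriv (i + 1) c t)) :
    ∀ t : ℝ,
      ⟪deriv (frenetFrame c 0) t, frenetFrame c 1 t⟫
          = gvol 2 (curveDerivs c t) / ‖deriv c t‖ ^ 2
      ∧ ⟪deriv (frenetFrame c 0) t, frenetFrame c 1 t⟫ / ‖deriv c t‖
          = gvol 2 (curveDerivs c t) / ‖deriv c t‖ ^ 3 := by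
  intro t₀
  set v : EuclideanSpace ℝ (Fin n) := deriv c t₀ with hv_def
  set a : EuclideanSpace ℝ (Fin n) := iteratedDeriv 2 c t₀ with ha_def
  -- linear independence of the pair (v, a)
  have h21 : 2 ≤ n - 1 := by omega
  have li2 : LinearIndependent ℝ ![v, a] := by
    have := (hreg t₀).comp (Fin.castLE h21) (Fin.castLE_injective h21)
    have heq : (fun i : Fin 2 => iteratedDeriv ((Fin.castLE h21 i : Fin (n-1)) + 1) c t₀)
        = ![v, a] := by
      funext i
      fin_cases i <;> simp [iteratedDeriv_one, hv_def, ha_def]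
    rw [Function.comp_def] at this
    rwa [heq] at this
  have hv0 : v ≠ 0 := by
    intro h
    exact one_ne_zero (LinearIndependent.pair_iff.mp li2 1 0 (by simp [h])).1
  have hvnorm : ‖v‖ ≠ 0 := norm_ne_zero_iff.mpr hv0
  -- the Gram–Schmidt vector w
  set w : EuclideanSpace ℝ (Fin n) := a - (⟪v, a⟫ / ‖v‖ ^ 2) • v with hw_def
  have hw0 : w ≠ 0 := by
    intro h
    have ha : a = (⟪v, a⟫ / ‖v‖ ^ 2) • v := by
      have := sub_eq_zero.mp h
      linear_combination (norm := module) this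
    have := (LinearIndependent.pair_iff.mp li2 (⟪v, a⟫ / ‖v‖ ^ 2) (-1)
      (by rw [← ha]; module)).2
    norm_num at this
  have hwnorm : ‖w‖ ≠ 0 := norm_ne_zero_iff.mpr hw0
  -- inner products with w
  have hvw : ⟪v, w⟫ = 0 := by
    rw [hw_def, inner_sub_right, real_inner_smul_right, real_inner_self_eq_norm_sq]
    field_simp
    ring
  have haw : ⟪a, w⟫ = ‖w‖ ^ 2 := by
    have ha : a = w + (⟪v, a⟫ / ‖v‖ ^ 2) • v := by rw [hw_def]; module
    rw [← real_inner_self_eq_norm_sq]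
    nth_rewrite 1 [ha]
    rw [inner_add_left, real_inner_smul_left, hvw]
    ring
  -- values of the Frenet frame at t₀
  have hcd0 : curveDerivs c t₀ 0 = v := by
    simp [curveDerivs, iteratedDeriv_one, hv_def]
  have hcd1 : curveDerivs c t₀ 1 = a := rfl
  have hgs1 : InnerProductSpace.gramSchmidt ℝ (curveDerivs c t₀) 1 = w := by
    rw [gramSchmidt_nat_one, hcd0, hcd1, hw_def]
  have he2 : frenetFrame c 1 t₀ = ‖w‖⁻¹ • w := by
    rw [frenetFrame, InnerProductSpace.gramSchmidtNormed, hgs1]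
    norm_num
  -- the first frame vector as a function
  have he1 : frenetFrame c 0 = fun t => ‖deriv c t‖⁻¹ • deriv c t := by
    funext t
    rw [frenetFrame, InnerProductSpace.gramSchmidtNormed, gramSchmidt_nat_zero]
    simp [curveDerivs, iteratedDeriv_one]
  -- differentiate e₁
  have hc' : ContDiff ℝ (⊤ : ℕ∞) c := hc.of_le (by simp)
  have hcd : ContDiff ℝ (⊤ : ℕ∞) (deriv c) := (contDiff_infty_iff_deriv.mp hc').2
  have hda : HasDerivAt (deriv c) a t₀ := by
    have : DifferentiableAt ℝ (deriv c) t₀ := hcd.differentiable (by simp) t₀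
    have h2 : iteratedDeriv 2 c = deriv (deriv c) := by
      rw [iteratedDeriv_succ, iteratedDeriv_one]
    rw [ha_def, h2]
    exact this.hasDerivAt
  have hg : DifferentiableAt ℝ (fun t => ‖deriv c t‖⁻¹) t₀ := by
    have h1 : DifferentiableAt ℝ (fun t => ‖deriv c t‖) t₀ :=
      DifferentiableAt.norm ℝ (hcd.differentiable (by simp) t₀) hv0
    exact h1.inv hvnorm
  set g' : ℝ := deriv (fun t => ‖deriv c t‖⁻¹) t₀ with hg'_def
  have hd1 : HasDerivAt (frenetFrame c 0) (‖v‖⁻¹ • a + g' • v) t₀ := by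
    rw [he1]
    exact hg.hasDerivAt.smul hda
  have hderiv : deriv (frenetFrame c 0) t₀ = ‖v‖⁻¹ • a + g' • v := hd1.deriv
  -- the inner product ⟪e₁', e₂⟫
  have hwv : ⟪w, v⟫ = 0 := by rw [real_inner_comm]; exact hvw
  have hinner : ⟪deriv (frenetFrame c 0) t₀, frenetFrame c 1 t₀⟫ = ‖w‖ / ‖v‖ := by
    rw [hderiv, he2, inner_add_left, real_inner_smul_left, real_inner_smul_left,
      real_inner_smul_right, real_inner_smul_right, haw, hvw]
    field_simp
    ring
  -- the Gram determinant
  have hgvol : gvol 2 (curveDerivs c t₀) = ‖v‖ * ‖w‖ := by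
    rw [gvol]
    have hdet : (Matrix.of fun i j : Fin 2 => ⟪curveDerivs c t₀ i, curveDerivs c t₀ j⟫).det
        = (‖v‖ * ‖w‖) ^ 2 := by
      rw [Matrix.det_fin_two]
      simp only [Matrix.of_apply]
      rw [show ((0 : Fin 2) : ℕ) = 0 from rfl, show ((1 : Fin 2) : ℕ) = 1 from rfl,
        hcd0, hcd1]
      have hav : ⟪a, v⟫ = ⟪v, a⟫ := real_inner_comm v a
      have hvv : ⟪v, v⟫ = ‖v‖ ^ 2 := by rw [real_inner_self_eq_norm_sq]
      have haa : ⟪a, a⟫ = ‖a‖ ^ 2 := by rw [real_inner_self_eq_norm_sq]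
      have hww : ‖w‖ ^ 2 = ‖a‖ ^ 2 - ⟪v, a⟫ ^ 2 / ‖v‖ ^ 2 := by
        have e1 : ‖w‖ ^ 2 = ⟪w, w⟫ := by rw [real_inner_self_eq_norm_sq]
        rw [e1, hw_def]
        simp only [inner_sub_left, inner_sub_right, real_inner_smul_left,
          real_inner_smul_right, hav, hvv, haa]
        generalize ⟪v, a⟫ = k
        field_simp
        ring
      rw [hvv, haa, hav, mul_pow, hww]
      generalize ⟪v, a⟫ = k
      field_simp
    rw [hdet, Real.sqrt_sq (by positivity)]
  constructor
  · rw [hinner, hgvol]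
    field_simp
  · rw [hinner, hgvol]
    field_simp
end

section
/- Let n ≥ 4 and let c : ℝ → EuclideanSpace ℝ (Fin n) be a smooth regular curve with Frenet–Serret frame e₁(t),…,e_{n−1}(t). Then for every t, ⟨e₂'(t), e₃(t)⟩ = ‖c'(t)‖ · vol(c'(t), c''(t), c'''(t)) / vol(c'(t), c''(t))²; equivalently, the second curvature satisfies κ₂(t) = vol(c'(t), c''(t), c'''(t)) / vol(c'(t), c''(t))². -/
open scoped RealInnerProductSpace

open InnerProductSpace

section Helpers
variable {E : Type*} [NormedAddCommGroup E] [InnerProductSpace ℝ E]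

-- decomposition lemmas
lemma gs_decomp1 (v : ℕ → E) :
    ∃ α : ℝ, v 1 = gramSchmidt ℝ v 1 + α • gramSchmidt ℝ v 0 := by
  refine ⟨⟪gramSchmidt ℝ v 0, v 1⟫ / (‖gramSchmidt ℝ v 0‖ : ℝ) ^ 2, ?_⟩
  have h := gramSchmidt_def'' ℝ v 1
  have : Finset.Iio 1 = ({0} : Finset ℕ) := by decide
  rw [this] at h
  simpa using h

lemma gs_decomp2 (v : ℕ → E) :
    ∃ β γ : ℝ, v 2 = gramSchmidt ℝ v 2 + β • gramSchmidt ℝ v 0 + γ • gramSchmidt ℝ v 1 := by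
  refine ⟨⟪gramSchmidt ℝ v 0, v 2⟫ / (‖gramSchmidt ℝ v 0‖ : ℝ) ^ 2,
    ⟪gramSchmidt ℝ v 1, v 2⟫ / (‖gramSchmidt ℝ v 1‖ : ℝ) ^ 2, ?_⟩
  have h := gramSchmidt_def'' ℝ v 2
  have : Finset.Iio 2 = ({0, 1} : Finset ℕ) := by decide
  rw [this] at h
  rw [Finset.sum_insert (by decide), Finset.sum_singleton] at h
  rw [add_assoc]; exact h

lemma gs_orth (v : ℕ → E) {i j : ℕ} (h : i ≠ j) :
    ⟪gramSchmidt ℝ v i, gramSchmidt ℝ v j⟫ = 0 :=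
  gramSchmidt_orthogonal ℝ v h

lemma gram_det2 (v : ℕ → E) (h0 : v 0 = gramSchmidt ℝ v 0) :
    Matrix.det (Matrix.of fun i j : Fin 2 => ⟪v i, v j⟫)
      = ‖gramSchmidt ℝ v 0‖ ^ 2 * ‖gramSchmidt ℝ v 1‖ ^ 2 := by
  obtain ⟨α, h1⟩ := gs_decomp1 v
  rw [Matrix.det_fin_two]
  simp only [Matrix.of_apply]
  norm_num [h0, h1, inner_add_left, inner_add_right, inner_smul_left, inner_smul_right,
    gs_orth v (show (0:ℕ) ≠ 1 by decide), gs_orth v (show (1:ℕ) ≠ 0 by decide),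
    real_inner_self_eq_norm_sq, real_inner_comm (gramSchmidt ℝ v 0),
    norm_add_sq_real, norm_smul, Real.norm_eq_abs, mul_pow, sq_abs]
  ring

lemma gram_det3 (v : ℕ → E) (h0 : v 0 = gramSchmidt ℝ v 0) :
    Matrix.det (Matrix.of fun i j : Fin 3 => ⟪v i, v j⟫)
      = ‖gramSchmidt ℝ v 0‖ ^ 2 * ‖gramSchmidt ℝ v 1‖ ^ 2 * ‖gramSchmidt ℝ v 2‖ ^ 2 := by
  obtain ⟨α, h1⟩ := gs_decomp1 v
  obtain ⟨β, γ, h2⟩ := gs_decomp2 v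
  rw [Matrix.det_fin_three]
  simp only [Matrix.of_apply]
  norm_num [h0, h1, h2, inner_add_left, inner_add_right, inner_smul_left, inner_smul_right,
    gs_orth v (show (0:ℕ) ≠ 1 by decide), gs_orth v (show (1:ℕ) ≠ 0 by decide),
    gs_orth v (show (0:ℕ) ≠ 2 by decide), gs_orth v (show (2:ℕ) ≠ 0 by decide),
    gs_orth v (show (1:ℕ) ≠ 2 by decide), gs_orth v (show (2:ℕ) ≠ 1 by decide),
    real_inner_self_eq_norm_sq, real_inner_comm (gramSchmidt ℝ v 0),
    real_inner_comm (gramSchmidt ℝ v 1),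
    norm_add_sq_real, norm_smul, Real.norm_eq_abs, mul_pow, sq_abs]
  ring

lemma inner_v0_gs2 (v : ℕ → E) (h0 : v 0 = gramSchmidt ℝ v 0) :
    ⟪v 0, gramSchmidt ℝ v 2⟫ = 0 := by
  rw [h0]; exact gs_orth v (by decide)

lemma inner_v1_gs2 (v : ℕ → E) : ⟪v 1, gramSchmidt ℝ v 2⟫ = 0 := by
  obtain ⟨α, h1⟩ := gs_decomp1 v
  rw [h1]
  simp [inner_add_left, inner_smul_left, gs_orth v (show (0:ℕ) ≠ 2 by decide),
    gs_orth v (show (1:ℕ) ≠ 2 by decide)]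

lemma inner_v2_gs2 (v : ℕ → E) : ⟪v 2, gramSchmidt ℝ v 2⟫ = ‖gramSchmidt ℝ v 2‖ ^ 2 := by
  obtain ⟨β, γ, h2⟩ := gs_decomp2 v
  rw [h2]
  simp [inner_add_left, inner_smul_left, gs_orth v (show (0:ℕ) ≠ 2 by decide),
    gs_orth v (show (1:ℕ) ≠ 2 by decide), real_inner_self_eq_norm_sq]

lemma gs_ne_zero {n : ℕ} (hn : 4 ≤ n) (c : ℝ → EuclideanSpace ℝ (Fin n))
    (hreg : ∀ t, LinearIndependent ℝ (fun i : Fin (n - 1) => iteratedDeriv (i + 1) c t))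
    (s : ℝ) {k : ℕ} (hk : k ≤ 2) : gramSchmidt ℝ (curveDerivs c s) k ≠ 0 := by
  apply gramSchmidt_ne_zero_coe (𝕜 := ℝ) k
  have e : Set.Iic k → Fin (n - 1) := fun i => ⟨i.1, by have := Set.mem_Iic.mp i.2; omega⟩
  have : (curveDerivs c s ∘ ((↑) : Set.Iic k → ℕ))
      = (fun i : Fin (n - 1) => iteratedDeriv (i + 1) c s) ∘ (fun i : Set.Iic k => (⟨i.1, by have := Set.mem_Iic.mp i.2; omega⟩ : Fin (n - 1))) := rfl
  rw [this]
  exact (hreg s).comp _ (fun i j hij => by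
    apply Subtype.ext
    exact congrArg Fin.val hij)

lemma gvol2_eq (v : ℕ → E) (h0 : v 0 = gramSchmidt ℝ v 0) :
    gvol 2 v = ‖gramSchmidt ℝ v 0‖ * ‖gramSchmidt ℝ v 1‖ := by
  rw [gvol, gram_det2 v h0, ← mul_pow, Real.sqrt_sq (by positivity)]

lemma gvol3_eq (v : ℕ → E) (h0 : v 0 = gramSchmidt ℝ v 0) :
    gvol 3 v = ‖gramSchmidt ℝ v 0‖ * ‖gramSchmidt ℝ v 1‖ * ‖gramSchmidt ℝ v 2‖ := by
  rw [gvol, gram_det3 v h0, ← mul_pow, ← mul_pow, Real.sqrt_sq (by positivity)]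

end Helpers

/-- **Corollary 6.1 (second formula) of the paper.**  For a smooth regular curve `c`
in `ℝⁿ` (`n ≥ 4`) with Frenet–Serret frame `e₁, …, e_{n-1}`:
`⟪e₂'(t), e₃(t)⟫ = ‖c'(t)‖ · vol(c', c'', c''') / vol(c', c'')²`, equivalently the
second curvature `κ₂(t) = ⟪e₂'(t), e₃(t)⟫ / ‖c'(t)‖` satisfies
`κ₂(t) = vol(c', c'', c''') / vol(c', c'')²`. -/
theorem second_curvature_eq
    (n : ℕ) (hn : 4 ≤ n) (c : ℝ → EuclideanSpace ℝ (Fin n))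
    (hc : ContDiff ℝ (⊤ : ℕ∞) c)
    (hreg : ∀ t, LinearIndependent ℝ (fun i : Fin (n - 1) => iteratedDeriv (i + 1) c t)) :
    ∀ t : ℝ,
      ⟪deriv (frenetFrame c 1) t, frenetFrame c 2 t⟫
          = ‖deriv c t‖ * gvol 3 (curveDerivs c t) / (gvol 2 (curveDerivs c t)) ^ 2
      ∧ ⟪deriv (frenetFrame c 1) t, frenetFrame c 2 t⟫ / ‖deriv c t‖
          = gvol 3 (curveDerivs c t) / (gvol 2 (curveDerivs c t)) ^ 2 := by
  intro t
  have h0 : ∀ s : ℝ, curveDerivs c s 0 = gramSchmidt ℝ (curveDerivs c s) 0 := by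
    intro s
    rw [gramSchmidt_def]
    have : Finset.Iio (0:ℕ) = ∅ := by decide
    rw [this, Finset.sum_empty, sub_zero]
  have hne : ∀ (s : ℝ) (k : ℕ), k ≤ 2 → gramSchmidt ℝ (curveDerivs c s) k ≠ 0 :=
    fun s k hk => gs_ne_zero hn c hreg s hk
  -- the iterated derivatives as functions of the parameter
  set W : ℕ → ℝ → EuclideanSpace ℝ (Fin n) := fun k s => iteratedDeriv (k + 1) c s with hW
  have hWc : ∀ (k : ℕ) (s : ℝ), curveDerivs c s k = W k s := fun k s => rfl
  have hd : ∀ (k : ℕ) (s : ℝ), HasDerivAt (W k) (W (k + 1) s) s := by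
    intro k s
    have h1 : Differentiable ℝ (iteratedDeriv (k + 1) c) :=
      hc.differentiable_iteratedDeriv _ (by exact_mod_cast WithTop.coe_lt_top _)
    have h2 := (h1 s).hasDerivAt
    have h3 : deriv (iteratedDeriv (k + 1) c) s = iteratedDeriv (k + 2) c s := by
      rw [← iteratedDeriv_succ]
    rw [h3] at h2
    exact h2
  set a : ℝ → ℝ := fun s => ⟪W 0 s, W 0 s⟫ with ha
  set b : ℝ → ℝ := fun s => ⟪W 0 s, W 1 s⟫ with hb
  set φ : ℝ → ℝ := fun s => b s / a s with hφdef
  set U : ℝ → EuclideanSpace ℝ (Fin n) := fun s => W 1 s - φ s • W 0 s with hUdef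
  have hUg : ∀ s : ℝ, U s = gramSchmidt ℝ (curveDerivs c s) 1 := by
    intro s
    have hIio : Finset.Iio 1 = ({0} : Finset ℕ) := by decide
    have h : gramSchmidt ℝ (curveDerivs c s) 1 = curveDerivs c s 1 -
        (⟪curveDerivs c s 0, curveDerivs c s 1⟫ / ((‖curveDerivs c s 0‖ : ℝ) ^ 2)) •
          curveDerivs c s 0 := by
      rw [gramSchmidt_def, hIio, Finset.sum_singleton, Submodule.starProjection_singleton, ← h0 s]
      norm_num
    show W 1 s - φ s • W 0 s = _
    rw [h, ← real_inner_self_eq_norm_sq]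
    rfl
  have hF1 : frenetFrame c 1 = fun s => (Real.sqrt ⟪U s, U s⟫)⁻¹ • U s := by
    funext s
    have hn : Real.sqrt ⟪U s, U s⟫ = ‖U s‖ := by
      rw [real_inner_self_eq_norm_sq, Real.sqrt_sq (norm_nonneg _)]
    rw [frenetFrame, gramSchmidtNormed, ← hUg s, hn]
    norm_num
  -- nonvanishing facts at t
  have hU0 : U t ≠ 0 := by rw [hUg t]; exact hne t 1 (by norm_num)
  have hinner_pos : (0 : ℝ) < ⟪U t, U t⟫ := by
    rw [real_inner_self_eq_norm_sq]
    exact pow_pos (norm_pos_iff.mpr hU0) 2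
  have hsqrt_ne : Real.sqrt ⟪U t, U t⟫ ≠ 0 := ne_of_gt (Real.sqrt_pos.mpr hinner_pos)
  have hW0ne : W 0 t ≠ 0 := by
    rw [← hWc 0 t, h0 t]
    exact hne t 0 (by norm_num)
  have ha_ne : a t ≠ 0 := by
    show ⟪W 0 t, W 0 t⟫ ≠ 0
    rw [real_inner_self_eq_norm_sq]
    exact ne_of_gt (pow_pos (norm_pos_iff.mpr hW0ne) 2)
  -- differentiability
  have hWd : ∀ k : ℕ, DifferentiableAt ℝ (W k) t := fun k => (hd k t).differentiableAt
  have hadiff : DifferentiableAt ℝ a t := (hWd 0).inner ℝ (hWd 0)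
  have hbdiff : DifferentiableAt ℝ b t := (hWd 0).inner ℝ (hWd 1)
  have hφ : DifferentiableAt ℝ φ t := hbdiff.div hadiff ha_ne
  set φ' := deriv φ t with hφ'def
  have hU' : HasDerivAt U (W 2 t - (φ t • W 1 t + φ' • W 0 t)) t :=
    (hd 1 t).sub (hφ.hasDerivAt.smul (hd 0 t))
  have hUdiff : DifferentiableAt ℝ U t := hU'.differentiableAt
  have hρ : DifferentiableAt ℝ (fun s => (Real.sqrt ⟪U s, U s⟫)⁻¹) t :=
    (((hUdiff.inner ℝ hUdiff).sqrt (ne_of_gt hinner_pos)).inv hsqrt_ne)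
  set ρ' := deriv (fun s => (Real.sqrt ⟪U s, U s⟫)⁻¹) t with hρ'def
  have hE : HasDerivAt (frenetFrame c 1)
      ((Real.sqrt ⟪U t, U t⟫)⁻¹ • (W 2 t - (φ t • W 1 t + φ' • W 0 t)) + ρ' • U t) t := by
    rw [hF1]
    exact hρ.hasDerivAt.smul hU'
  have hderiv : deriv (frenetFrame c 1) t =
      (Real.sqrt ⟪U t, U t⟫)⁻¹ • (W 2 t - (φ t • W 1 t + φ' • W 0 t)) + ρ' • U t := hE.deriv
  -- abbreviations for the Gram-Schmidt vectors at t
  set g0 := gramSchmidt ℝ (curveDerivs c t) 0 with hg0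
  set g1 := gramSchmidt ℝ (curveDerivs c t) 1 with hg1
  set g2 := gramSchmidt ℝ (curveDerivs c t) 2 with hg2
  have hg0ne : g0 ≠ 0 := hne t 0 (by norm_num)
  have hg1ne : g1 ≠ 0 := hne t 1 (by norm_num)
  have hg2ne : g2 ≠ 0 := hne t 2 (by norm_num)
  have hF2 : frenetFrame c 2 t = (‖g2‖ : ℝ)⁻¹ • g2 := rfl
  have hsq : Real.sqrt ⟪U t, U t⟫ = ‖g1‖ := by
    rw [real_inner_self_eq_norm_sq, Real.sqrt_sq (norm_nonneg _), hUg t]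
  -- inner products with g2
  have hi0 : ⟪W 0 t, g2⟫ = 0 := by
    rw [← hWc 0 t]
    exact inner_v0_gs2 _ (h0 t)
  have hi1 : ⟪W 1 t, g2⟫ = 0 := by
    rw [← hWc 1 t]
    exact inner_v1_gs2 _
  have hi2 : ⟪W 2 t, g2⟫ = ‖g2‖ ^ 2 := by
    rw [← hWc 2 t]
    exact inner_v2_gs2 _
  have hiU : ⟪U t, g2⟫ = 0 := by
    rw [hUg t]
    exact gs_orth _ (by decide)
  -- the left-hand side
  have hLHS : ⟪deriv (frenetFrame c 1) t, frenetFrame c 2 t⟫ = ‖g1‖⁻¹ * ‖g2‖ := by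
    rw [hderiv, hF2, hsq]
    rw [inner_add_left, inner_smul_left, inner_smul_left, inner_smul_right, inner_smul_right,
      inner_sub_left, inner_add_left, inner_smul_left, inner_smul_left, hi0, hi1, hi2, hiU]
    simp only [conj_trivial, mul_zero, add_zero, sub_zero, zero_mul]
    have hn2 : ‖g2‖ ≠ 0 := norm_ne_zero_iff.mpr hg2ne
    field_simp
  -- norms and volumes
  have hdc : deriv c t = curveDerivs c t 0 := by
    show deriv c t = iteratedDeriv 1 c t
    rw [iteratedDeriv_one]
  have hnc : ‖deriv c t‖ = ‖g0‖ := by rw [hdc, h0 t]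
  have hv2 : gvol 2 (curveDerivs c t) = ‖g0‖ * ‖g1‖ := gvol2_eq _ (h0 t)
  have hv3 : gvol 3 (curveDerivs c t) = ‖g0‖ * ‖g1‖ * ‖g2‖ := gvol3_eq _ (h0 t)
  have hn0 : ‖g0‖ ≠ 0 := norm_ne_zero_iff.mpr hg0ne
  have hn1 : ‖g1‖ ≠ 0 := norm_ne_zero_iff.mpr hg1ne
  have hn2 : ‖g2‖ ≠ 0 := norm_ne_zero_iff.mpr hg2ne
  constructor
  · rw [hLHS, hnc, hv2, hv3]
    field_simp
  · rw [hLHS, hnc, hv2, hv3]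
    field_simp
end

section
/- Let n ≥ 2 and let c : ℝ → EuclideanSpace ℝ (Fin n) be a smooth regular curve with Frenet–Serret frame e₁(t),…,e_{n−1}(t) and curvatures κ_i(t) = ⟨e_i'(t), e_{i+1}(t)⟩ / ‖c'(t)‖. Then for every t and every r with 1 ≤ r ≤ n−1, vol(c'(t),…,c^{(r)}(t)) / ‖c'(t)‖^{r(r+1)/2} = κ₁(t)^{r−1} κ₂(t)^{r−2} ⋯ κ_{r−2}(t)² κ_{r−1}(t), i.e. vol(c'(t),…,c^{(r)}(t)) = ‖c'(t)‖^{r(r+1)/2} · ∏_{i=1}^{r−1} κ_i(t)^{r−i}. -/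
open scoped RealInnerProductSpace

/-- The `(i+1)`-st Frenet–Serret curvature `κ_{i+1}(t) = ⟪e_{i+1}'(t), e_{i+2}(t)⟫ / ‖c'(t)‖`
(so `curvature c 0 = κ₁`). -/
noncomputable def curvature {n : ℕ} (c : ℝ → EuclideanSpace ℝ (Fin n)) (i : ℕ) (t : ℝ) : ℝ :=
  ⟪deriv (frenetFrame c i) t, frenetFrame c (i + 1) t⟫ / ‖deriv c t‖


section aux
open Finset
open InnerProductSpace
open scoped Matrix

variable {E : Type*} [NormedAddCommGroup E] [InnerProductSpace ℝ E]

noncomputable def gsCoef (v : ℕ → E) (i j : ℕ) : ℝ :=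
  if i = j then 1 else if i < j then ⟪gramSchmidt ℝ v i, v j⟫ / ‖gramSchmidt ℝ v i‖ ^ 2 else 0

lemma v_eq_sum_gsCoef (v : ℕ → E) (k : ℕ) {j : ℕ} (hj : j < k) :
    v j = ∑ i ∈ range k, gsCoef v i j • gramSchmidt ℝ v i := by
  rw [← Finset.sum_range_add_sum_Ico _ hj.le]
  have h1 : ∑ i ∈ range j, gsCoef v i j • gramSchmidt ℝ v i
      = ∑ i ∈ Finset.Iio j, (⟪gramSchmidt ℝ v i, v j⟫ / (‖gramSchmidt ℝ v i‖:ℝ) ^ 2)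
          • gramSchmidt ℝ v i := by
    rw [← Nat.Iio_eq_range]
    refine Finset.sum_congr rfl fun i hi => ?_
    have hi' : i < j := Finset.mem_Iio.mp hi
    simp [gsCoef, hi'.ne, hi']
  have h2 : ∑ i ∈ Ico j k, gsCoef v i j • gramSchmidt ℝ v i = gramSchmidt ℝ v j := by
    rw [Finset.sum_eq_single_of_mem j (Finset.mem_Ico.mpr ⟨le_rfl, hj⟩)]
    · simp [gsCoef]
    · intro i hi hne
      have : j < i := lt_of_le_of_ne (Finset.mem_Ico.mp hi).1 (Ne.symm hne)
      simp [gsCoef, hne, not_lt.mpr this.le]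
  rw [h1, h2, add_comm]
  have := gramSchmidt_def'' ℝ v j
  simpa using this

lemma gvol_eq_prod_gramSchmidt (v : ℕ → E) (k : ℕ) :
    gvol k v = ∏ i ∈ range k, ‖gramSchmidt ℝ v i‖ := by
  set w := gramSchmidt ℝ v with hw
  set A : Matrix (Fin k) (Fin k) ℝ := Matrix.of fun i j => gsCoef v i j with hA
  have hG : (Matrix.of fun i j : Fin k => ⟪v i, v j⟫)
      = Aᵀ * Matrix.diagonal (fun i : Fin k => ‖w i‖ ^ 2) * A := by
    ext p q
    have hRHS : (Aᵀ * Matrix.diagonal (fun i : Fin k => ‖w i‖ ^ 2) * A) p q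
        = ∑ i : Fin k, gsCoef v i p * (gsCoef v i q * ‖w i‖ ^ 2) := by
      rw [Matrix.mul_apply]
      simp only [Matrix.mul_diagonal, Matrix.transpose_apply, hA, Matrix.of_apply]
      exact Finset.sum_congr rfl fun i _ => by ring
    rw [hRHS]
    have hL : ⟪v (p:ℕ), v (q:ℕ)⟫
        = ∑ i ∈ range k, gsCoef v i p * (gsCoef v i q * ‖w i‖ ^ 2) := by
      rw [v_eq_sum_gsCoef v k p.isLt, v_eq_sum_gsCoef v k q.isLt]
      rw [sum_inner]
      refine Finset.sum_congr rfl fun i hi => ?_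
      rw [inner_sum]
      simp only [real_inner_smul_left, real_inner_smul_right]
      rw [Finset.sum_eq_single_of_mem i hi]
      · rw [real_inner_self_eq_norm_sq]; ring
      · intro j hj hne
        rw [gramSchmidt_orthogonal ℝ v hne.symm]; ring
    rw [Matrix.of_apply, hL, Finset.sum_range fun i =>
      gsCoef v i p * (gsCoef v i q * ‖w i‖ ^ 2)]
  have hdetA : A.det = 1 := by
    rw [Matrix.det_of_upperTriangular]
    · refine Finset.prod_eq_one fun i _ => ?_
      simp [hA, gsCoef]
    · intro i j hij
      have : ¬ ((i:ℕ) < (j:ℕ)) := by exact_mod_cast not_lt.mpr (le_of_lt hij)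
      have hne : (i:ℕ) ≠ (j:ℕ) := by exact_mod_cast (Fin.val_ne_of_ne (ne_of_gt hij))
      show gsCoef v i j = 0
      unfold gsCoef
      rw [if_neg hne, if_neg this]
  have hdet : (Matrix.of fun i j : Fin k => ⟪v i, v j⟫).det
      = ∏ i : Fin k, ‖w i‖ ^ 2 := by
    rw [hG, Matrix.det_mul, Matrix.det_mul, Matrix.det_transpose, hdetA,
      Matrix.det_diagonal, one_mul, mul_one]
  rw [gvol, hdet, ← Finset.prod_range (fun i => ‖w i‖ ^ 2), Finset.prod_pow]
  exact Real.sqrt_sq (Finset.prod_nonneg fun i _ => norm_nonneg _)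

section helpers
variable {E : Type*} [NormedAddCommGroup E] [InnerProductSpace ℝ E]

lemma inner_eq_zero_of_mem_span {s : Set E} {x y : E} (hx : x ∈ Submodule.span ℝ s)
    (hy : ∀ z ∈ s, ⟪z, y⟫ = 0) : ⟪x, y⟫ = 0 := by
  induction hx using Submodule.span_induction with
  | mem z hz => exact hy z hz
  | zero => simp
  | add a b _ _ ha hb => rw [inner_add_left, ha, hb, add_zero]
  | smul r a _ ha => rw [real_inner_smul_left, ha, mul_zero]

lemma W_formula_gen (f : ℕ → E) (i : ℕ) :
    gramSchmidt ℝ f i = f i - ∑ j ∈ Finset.range i,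
        (⟪gramSchmidt ℝ f j, f i⟫ / ‖gramSchmidt ℝ f j‖ ^ 2) • gramSchmidt ℝ f j := by
  have h := gramSchmidt_def'' ℝ f i
  rw [← Nat.Iio_eq_range]
  have h' : f i = gramSchmidt ℝ f i + ∑ j ∈ Finset.Iio i,
      (⟪gramSchmidt ℝ f j, f i⟫ / ‖gramSchmidt ℝ f j‖ ^ 2) • gramSchmidt ℝ f j := by
    simpa using h
  exact eq_sub_of_add_eq h'.symm
end helpers

variable {n : ℕ} {c : ℝ → EuclideanSpace ℝ (Fin n)}

lemma diff_curveDerivs (hc : ContDiff ℝ (⊤ : ℕ∞) c) (i : ℕ) :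
    Differentiable ℝ (fun t => curveDerivs c t i) :=
  hc.differentiable_iteratedDeriv (i + 1) (by exact_mod_cast WithTop.coe_lt_top _)

lemma deriv_curveDerivs (i : ℕ) (t : ℝ) :
    deriv (fun t => curveDerivs c t i) t = curveDerivs c t (i + 1) := by
  show deriv (iteratedDeriv (i + 1) c) t = iteratedDeriv (i + 1 + 1) c t
  rw [← iteratedDeriv_succ]

lemma W_ne_zero (hreg : ∀ t, LinearIndependent ℝ (fun i : Fin (n - 1) => iteratedDeriv (i + 1) c t))
    {i : ℕ} (hi : i < n - 1) (t : ℝ) :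
    gramSchmidt ℝ (curveDerivs c t) i ≠ 0 := by
  apply gramSchmidt_ne_zero_coe
  exact (hreg t).comp
    (fun x : Set.Iic i => (⟨x.1, lt_of_le_of_lt x.2 hi⟩ : Fin (n - 1)))
    (fun a b hab => Subtype.ext (by simpa using congrArg Fin.val hab))

noncomputable def Wf {n : ℕ} (c : ℝ → EuclideanSpace ℝ (Fin n)) (j : ℕ) (t : ℝ) :
    EuclideanSpace ℝ (Fin n) :=
  gramSchmidt ℝ (curveDerivs c t) j

noncomputable def phif {n : ℕ} (c : ℝ → EuclideanSpace ℝ (Fin n)) (i j : ℕ) (t : ℝ) : ℝ :=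
  ⟪Wf c j t, curveDerivs c t i⟫ / ‖Wf c j t‖ ^ 2

lemma Wf_formula (i : ℕ) (t : ℝ) :
    Wf c i t = curveDerivs c t i - ∑ j ∈ Finset.range i, phif c i j t • Wf c j t := by
  have h := W_formula_gen (curveDerivs c t) i
  exact h

lemma W_diff_deriv (hc : ContDiff ℝ (⊤ : ℕ∞) c)
    (hreg : ∀ t, LinearIndependent ℝ (fun i : Fin (n - 1) => iteratedDeriv (i + 1) c t)) :
    ∀ i, i < n - 1 →
      Differentiable ℝ (Wf c i) ∧
      ∀ t, deriv (Wf c i) t - curveDerivs c t (i + 1)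
        ∈ Submodule.span ℝ (curveDerivs c t '' Set.Iic i) := by
  intro i
  induction i using Nat.strong_induction_on with
  | _ i IH =>
    intro hi
    have hdiffW : ∀ j < i, Differentiable ℝ (Wf c j) := fun j hj =>
      (IH j hj (hj.trans hi)).1
    have hWne : ∀ j < i, ∀ t, Wf c j t ≠ 0 := fun j hj t =>
      W_ne_zero hreg (hj.trans hi) t
    have hphi : ∀ j < i, Differentiable ℝ (phif c i j) := by
      intro j hj
      have h1 : Differentiable ℝ (fun t => ⟪Wf c j t, curveDerivs c t i⟫) :=
        Differentiable.inner (𝕜 := ℝ) (hdiffW j hj) (diff_curveDerivs hc i)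
      have h2 : Differentiable ℝ (fun t => ‖Wf c j t‖ ^ 2) := by
        have h3 : (fun t => ‖Wf c j t‖ ^ 2) = fun t => ⟪Wf c j t, Wf c j t⟫ :=
          funext fun t => (real_inner_self_eq_norm_sq _).symm
        rw [h3]
        exact Differentiable.inner (𝕜 := ℝ) (hdiffW j hj) (hdiffW j hj)
      exact h1.div h2 fun t => pow_ne_zero 2 (norm_ne_zero_iff.mpr (hWne j hj t))
    have hdiffg : ∀ j < i, Differentiable ℝ (fun t => phif c i j t • Wf c j t) :=
      fun j hj => (hphi j hj).smul (hdiffW j hj)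
    have hfun : Wf c i = fun t =>
        curveDerivs c t i - ∑ j ∈ Finset.range i, phif c i j t • Wf c j t :=
      funext fun t => Wf_formula i t
    have hdiffsum : Differentiable ℝ (fun t => ∑ j ∈ Finset.range i, phif c i j t • Wf c j t) :=
      Differentiable.fun_sum fun j hj => hdiffg j (Finset.mem_range.mp hj)
    have hdiffWi : Differentiable ℝ (Wf c i) := by
      rw [hfun]; exact (diff_curveDerivs hc i).sub hdiffsum
    refine ⟨hdiffWi, fun t => ?_⟩
    have hderiv : deriv (Wf c i) t = curveDerivs c t (i + 1)
        - ∑ j ∈ Finset.range i, deriv (fun s => phif c i j s • Wf c j s) t := by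
      rw [hfun, deriv_fun_sub ((diff_curveDerivs hc i) t) (hdiffsum t),
        deriv_curveDerivs, deriv_fun_sum fun j hj => (hdiffg j (Finset.mem_range.mp hj)) t]
    rw [hderiv, sub_sub_cancel_left]
    refine Submodule.neg_mem _ (Submodule.sum_mem _ fun j hj => ?_)
    have hj : j < i := Finset.mem_range.mp hj
    have hWjmem : Wf c j t ∈ Submodule.span ℝ (curveDerivs c t '' Set.Iic i) :=
      Submodule.span_mono (Set.image_mono (Set.Iic_subset_Iic.mpr hj.le))
        (gramSchmidt_mem_span ℝ (curveDerivs c t) le_rfl)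
    rw [deriv_fun_smul ((hphi j hj) t) ((hdiffW j hj) t)]
    refine Submodule.add_mem _ ?_ (Submodule.smul_mem _ _ hWjmem)
    refine Submodule.smul_mem _ _ ?_
    have hsplit : deriv (Wf c j) t
        = (deriv (Wf c j) t - curveDerivs c t (j + 1)) + curveDerivs c t (j + 1) := by abel
    rw [hsplit]
    refine Submodule.add_mem _ ?_ (Submodule.subset_span ⟨j + 1, Set.mem_Iic.mpr hj, rfl⟩)
    exact Submodule.span_mono (Set.image_mono (Set.Iic_subset_Iic.mpr hj.le))
      ((IH j hj (hj.trans hi)).2 t)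

lemma frenet_eq (i : ℕ) : frenetFrame c i = fun t => (‖Wf c i t‖)⁻¹ • Wf c i t := rfl

lemma deriv_c_eq (t : ℝ) : deriv c t = curveDerivs c t 0 := by
  show deriv c t = iteratedDeriv 1 c t
  rw [iteratedDeriv_one]

lemma deriv_c_ne (hn : 2 ≤ n)
    (hreg : ∀ t, LinearIndependent ℝ (fun i : Fin (n - 1) => iteratedDeriv (i + 1) c t))
    (t : ℝ) : deriv c t ≠ 0 := by
  have h := (hreg t).ne_zero ⟨0, by omega⟩
  rw [deriv_c_eq]
  exact h

lemma inner_frenet_deriv (hc : ContDiff ℝ (⊤ : ℕ∞) c)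
    (hreg : ∀ t, LinearIndependent ℝ (fun i : Fin (n - 1) => iteratedDeriv (i + 1) c t))
    {i : ℕ} (hi : i + 1 < n - 1) (t : ℝ) :
    ⟪deriv (frenetFrame c i) t, frenetFrame c (i + 1) t⟫
      = ‖Wf c i t‖⁻¹ * ‖Wf c (i + 1) t‖ := by
  have hii : i < n - 1 := by omega
  have hdW : Differentiable ℝ (Wf c i) := (W_diff_deriv hc hreg i hii).1
  have hWnz : ∀ s, Wf c i s ≠ 0 := fun s => W_ne_zero hreg hii s
  have hW1nz : Wf c (i + 1) t ≠ 0 := W_ne_zero hreg hi t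
  have hinvdiff : DifferentiableAt ℝ (fun s => (‖Wf c i s‖)⁻¹) t :=
    ((hdW t).norm ℝ (hWnz t)).inv (norm_ne_zero_iff.mpr (hWnz t))
  rw [frenet_eq, frenet_eq]
  rw [deriv_fun_smul hinvdiff (hdW t)]
  rw [inner_add_left, real_inner_smul_left, real_inner_smul_left,
    real_inner_smul_right, real_inner_smul_right]
  have horth : ⟪Wf c i t, Wf c (i + 1) t⟫ = 0 :=
    gramSchmidt_orthogonal ℝ (curveDerivs c t) (by omega)
  rw [horth]
  have hsplit : deriv (Wf c i) t
      = (deriv (Wf c i) t - curveDerivs c t (i + 1)) + curveDerivs c t (i + 1) := by abel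
  rw [hsplit, inner_add_left]
  have hz : ⟪deriv (Wf c i) t - curveDerivs c t (i + 1), Wf c (i + 1) t⟫ = 0 := by
    refine inner_eq_zero_of_mem_span ((W_diff_deriv hc hreg i hii).2 t) ?_
    rintro z ⟨j, hj, rfl⟩
    rw [real_inner_comm]
    exact gramSchmidt_inv_triangular ℝ _ (by exact Nat.lt_succ_of_le hj)
  have hv : ⟪curveDerivs c t (i + 1), Wf c (i + 1) t⟫ = ‖Wf c (i + 1) t‖ ^ 2 := by
    have h := gramSchmidt_def'' ℝ (curveDerivs c t) (i + 1)
    have h' : curveDerivs c t (i + 1) = Wf c (i + 1) t + ∑ j ∈ Finset.Iio (i + 1),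
        (⟪Wf c j t, curveDerivs c t (i + 1)⟫ / ‖Wf c j t‖ ^ 2) • Wf c j t := by simpa [Wf] using h
    rw [h', inner_add_left, real_inner_self_eq_norm_sq, sum_inner]
    have : ∀ j ∈ Finset.Iio (i + 1),
        ⟪(⟪Wf c j t, curveDerivs c t (i + 1)⟫ / ‖Wf c j t‖ ^ 2) • Wf c j t,
          Wf c (i + 1) t⟫ = 0 := by
      intro j hj
      rw [real_inner_smul_left,
        show ⟪Wf c j t, Wf c (i + 1) t⟫ = (0:ℝ) from
          gramSchmidt_orthogonal ℝ (curveDerivs c t) (Finset.mem_Iio.mp hj).ne, mul_zero]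
    rw [Finset.sum_congr rfl this, Finset.sum_const_zero, add_zero]
  rw [hz, hv]
  have hnn : ‖Wf c (i + 1) t‖ ≠ 0 := norm_ne_zero_iff.mpr hW1nz
  have hnn2 : ‖Wf c i t‖ ≠ 0 := norm_ne_zero_iff.mpr (hWnz t)
  field_simp
  ring

lemma norm_W_succ (hn : 2 ≤ n) (hc : ContDiff ℝ (⊤ : ℕ∞) c)
    (hreg : ∀ t, LinearIndependent ℝ (fun i : Fin (n - 1) => iteratedDeriv (i + 1) c t))
    {i : ℕ} (hi : i + 1 < n - 1) (t : ℝ) :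
    ‖Wf c (i + 1) t‖ = curvature c i t * ‖deriv c t‖ * ‖Wf c i t‖ := by
  unfold curvature
  rw [inner_frenet_deriv hc hreg hi t]
  have h1 : ‖Wf c i t‖ ≠ 0 := norm_ne_zero_iff.mpr (W_ne_zero hreg (by omega) t)
  have h2 : ‖deriv c t‖ ≠ 0 := norm_ne_zero_iff.mpr (deriv_c_ne hn hreg t)
  field_simp

lemma norm_W_closed (hn : 2 ≤ n) (hc : ContDiff ℝ (⊤ : ℕ∞) c)
    (hreg : ∀ t, LinearIndependent ℝ (fun i : Fin (n - 1) => iteratedDeriv (i + 1) c t)) :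
    ∀ i, i < n - 1 → ∀ t,
      ‖Wf c i t‖ = ‖deriv c t‖ ^ (i + 1) * ∏ j ∈ Finset.range i, curvature c j t := by
  intro i
  induction i with
  | zero =>
    intro _ t
    have h0 : Wf c 0 t = curveDerivs c t 0 := by
      rw [Wf, gramSchmidt_def]
      rw [show (Finset.Iio 0 : Finset ℕ) = ∅ from rfl]
      simp
    rw [h0, ← deriv_c_eq]; simp
  | succ i ih =>
    intro hi t
    rw [norm_W_succ hn hc hreg hi t, ih (by omega) t, Finset.prod_range_succ]
    ring

lemma prod_prod_range (f : ℕ → ℝ) :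
    ∀ r : ℕ, ∏ i ∈ Finset.range r, ∏ j ∈ Finset.range i, f j
      = ∏ j ∈ Finset.range r, f j ^ (r - 1 - j) := by
  intro r
  induction r with
  | zero => simp
  | succ r ih =>
    rw [Finset.prod_range_succ, ih,
      Finset.prod_range_succ (f := fun j => f j ^ (r + 1 - 1 - j))]
    have h1 : r + 1 - 1 - r = 0 := by omega
    rw [h1, pow_zero, mul_one, ← Finset.prod_mul_distrib]
    refine Finset.prod_congr rfl fun j hj => ?_
    have h2 : r + 1 - 1 - j = (r - 1 - j) + 1 := by
      have := Finset.mem_range.mp hj; omega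
    rw [h2, pow_succ]

end aux

/-- **Corollary 6.4, claim 2 (volume identity), of the paper.**  For a smooth regular
curve `c` in `ℝⁿ` (`n ≥ 2`) with curvatures `κ_i = ⟪e_i', e_{i+1}⟫ / ‖c'‖` and every
`1 ≤ r ≤ n - 1`:
`vol(c'(t),…,c^{(r)}(t)) = ‖c'(t)‖^{r(r+1)/2} · κ₁(t)^{r-1} κ₂(t)^{r-2} ⋯ κ_{r-1}(t)`. -/
theorem vol_eq_prod_curvatures
    (n : ℕ) (hn : 2 ≤ n) (c : ℝ → EuclideanSpace ℝ (Fin n))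
    (hc : ContDiff ℝ (⊤ : ℕ∞) c)
    (hreg : ∀ t, LinearIndependent ℝ (fun i : Fin (n - 1) => iteratedDeriv (i + 1) c t)) :
    ∀ t : ℝ, ∀ r : ℕ, 1 ≤ r → r ≤ n - 1 →
      gvol r (curveDerivs c t)
        = ‖deriv c t‖ ^ (r * (r + 1) / 2)
            * ∏ i ∈ Finset.range (r - 1), (curvature c i t) ^ (r - 1 - i) := by
  intro t r hr hrn
  rw [gvol_eq_prod_gramSchmidt]
  have hstep : ∀ i ∈ Finset.range r, ‖InnerProductSpace.gramSchmidt ℝ (curveDerivs c t) i‖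
      = ‖deriv c t‖ ^ (i + 1) * ∏ j ∈ Finset.range i, curvature c j t := fun i hi =>
    norm_W_closed hn hc hreg i (lt_of_lt_of_le (Finset.mem_range.mp hi) hrn) t
  rw [Finset.prod_congr rfl hstep, Finset.prod_mul_distrib,
    Finset.prod_pow_eq_pow_sum, prod_prod_range]
  congr 1
  · congr 1
    have h2 : (∑ i ∈ Finset.range r, (i + 1)) * 2 = r * (r + 1) := by
      have h3 := Finset.sum_range_id_mul_two r
      rw [Finset.sum_add_distrib, Finset.sum_const, Finset.card_range, smul_eq_mul, mul_one,
        add_mul, h3]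
      have hr1 : r * (r - 1) + r * 2 = r * (r + 1) := by
        cases r with
        | zero => rfl
        | succ m => simp [Nat.succ_sub_one]; ring
      omega
    omega
  · obtain ⟨r', rfl⟩ : ∃ r', r = r' + 1 := ⟨r - 1, by omega⟩
    rw [Finset.prod_range_succ]
    simp
end

section
/- Let L be an invertible linear map of EuclideanSpace ℝ (Fin n) with singular values σ₁ ≥ σ₂ ≥ ⋯ ≥ σ_n > 0, i.e. the matrix of L in the standard basis factors as U · diag(σ₁,…,σ_n) · V with U and V orthogonal n×n matrices. Then for every 1 ≤ k ≤ n and all vectors v₁,…,v_k ∈ EuclideanSpace ℝ (Fin n): σ_{n−k+1} σ_{n−k+2} ⋯ σ_n · vol(v₁,…,v_k) ≤ vol(Lv₁,…,Lv_k) ≤ σ₁ σ₂ ⋯ σ_k · vol(v₁,…,v_k). -/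
/-!
Write `L = U D V` with `D = diag σ`. Orthogonal maps preserve Gram matrices, so `L` may be
replaced by `D` and `v` by `V v`. By the Cauchy–Binet formula the Gram determinant of vectors
with coordinate matrix `W` is `∑_S det (W_S)²`, summed over the `k`-element sets `S` of columns,
and `D` multiplies the term of `S` by `∏_{i ∈ S} σ_i²`. The `i`-th element of `S` lies between
`i` and `n - k + i`, so this factor lies between the squared products of the `k` smallest and of
the `k` largest singular values.
-/

open scoped RealInnerProductSpace

open Finset

open scoped Classical in
theorem Finset.sum_injective_eq_sum_strictMono_sum_perm {α M : Type*} [LinearOrder α] [Fintype α]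
    [AddCommMonoid M] {k : ℕ} (F : (Fin k → α) → M) :
    ∑ f with Function.Injective f, F f =
      ∑ g with StrictMono g, ∑ e : Equiv.Perm (Fin k), F (g ∘ e) := by
  rw [← sum_product']
  refine sum_nbij' (fun f => (f ∘ Tuple.sort f, (Tuple.sort f)⁻¹)) (fun p => p.1 ∘ p.2)
    ?_ ?_ ?_ ?_ ?_
  · intro f hf
    simp only [mem_filter, mem_univ, true_and] at hf
    simp only [mem_product, mem_filter, mem_univ, true_and, and_true]
    exact (Tuple.monotone_sort f).strictMono_of_injective (hf.comp (Tuple.sort f).injective)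
  · rintro ⟨g, e⟩ hp
    simp only [mem_product, mem_filter, mem_univ, true_and, and_true] at hp
    simpa using hp.injective.comp e.injective
  · intro f _
    ext i
    simp
  · rintro ⟨g, e⟩ hp
    simp only [mem_product, mem_filter, mem_univ, true_and, and_true] at hp
    have hsort : g ∘ e ∘ Tuple.sort (g ∘ e) = g := by
      rw [← Function.comp_assoc, Tuple.comp_perm_comp_sort_eq_comp_sort,
        Tuple.sort_eq_refl_iff_monotone.mpr hp.monotone]
      rfl
    have he : e * Tuple.sort (g ∘ e) = 1 := Equiv.ext fun i =>
      hp.injective (congrFun hsort i)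
    simp only [Prod.mk.injEq]
    exact ⟨hsort, (eq_inv_of_mul_eq_one_left he).symm⟩
  · intro f _
    congr 1
    ext i
    simp

namespace Matrix

variable {R : Type*} [CommRing R] {k n : ℕ}

theorem det_mul_eq_sum_prod_mul_det_submatrix {m n : Type*} [Fintype m] [DecidableEq m]
    [Fintype n] (A : Matrix m n R) (B : Matrix n m R) :
    det (A * B) = ∑ f : m → n, (∏ i, B (f i) i) * det (A.submatrix id f) := by
  simp only [det_apply', mul_apply, prod_univ_sum, Finset.mul_sum, Fintype.piFinset_univ]
  rw [Finset.sum_comm]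
  refine sum_congr rfl fun f _ => sum_congr rfl fun e _ => ?_
  simp only [submatrix_apply, id_eq, prod_mul_distrib]
  ring

theorem det_mul_eq_sum_strictMono (A : Matrix (Fin k) (Fin n) R) (B : Matrix (Fin n) (Fin k) R) :
    det (A * B) = ∑ g with StrictMono g, det (A.submatrix id g) * det (B.submatrix g id) := by
  have hvanish : ∀ f : Fin k → Fin n, ¬ Function.Injective f → det (A.submatrix id f) = 0 := by
    intro f hf
    obtain ⟨a, b, hab, hne⟩ := Function.not_injective_iff.mp hf
    exact det_zero_of_column_eq hne fun i => by simp [hab]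
  rw [det_mul_eq_sum_prod_mul_det_submatrix,
    ← sum_filter_of_ne fun f _ hf => by_contra fun hni => hf (by rw [hvanish f hni, mul_zero]),
    sum_injective_eq_sum_strictMono_sum_perm]
  refine sum_congr rfl fun g _ => ?_
  have hperm : ∀ e : Equiv.Perm (Fin k),
      det (A.submatrix id (g ∘ e)) = Equiv.Perm.sign e * det (A.submatrix id g) := fun e =>
    det_permute' e (A.submatrix id g)
  simp only [Function.comp_apply, hperm, det_apply' (B.submatrix g id), submatrix_apply, id_eq,
    Finset.mul_sum]
  refine sum_congr rfl fun e _ => ?_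
  ring

theorem det_mul_transpose_eq_sum_sq (A : Matrix (Fin k) (Fin n) R) :
    det (A * Aᵀ) = ∑ g : Fin k → Fin n with StrictMono g, det (A.submatrix id g) ^ 2 := by
  classical
  rw [det_mul_eq_sum_strictMono]
  refine sum_congr rfl fun g _ => ?_
  rw [← transpose_submatrix, det_transpose, sq]

end Matrix

section GramVolume

open Matrix

variable {k n : ℕ}

theorem gvol_map_of_inner_map_map {E F : Type*} [NormedAddCommGroup E] [InnerProductSpace ℝ E]
    [NormedAddCommGroup F] [InnerProductSpace ℝ F] {f : E → F}
    (hf : ∀ x y, ⟪f x, f y⟫ = ⟪x, y⟫) (v : ℕ → E) :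
    gvol k (fun i => f (v i)) = gvol k v := by
  simp only [gvol, hf]

theorem Matrix.inner_toEuclideanLin_toEuclideanLin {U : Matrix (Fin n) (Fin n) ℝ}
    (hU : U ∈ orthogonalGroup (Fin n) ℝ) (x y : EuclideanSpace ℝ (Fin n)) :
    ⟪toEuclideanLin U x, toEuclideanLin U y⟫ = ⟪x, y⟫ :=
  ContinuousLinearMap.inner_map_map_of_mem_unitary
    (Unitary.map_mem (toEuclideanCLM (n := Fin n) (𝕜 := ℝ)) hU) x y

theorem gvol_eq_sqrt_sum_sq_det (v : ℕ → EuclideanSpace ℝ (Fin n)) :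
    gvol k v = √(∑ g : Fin k → Fin n with StrictMono g,
      det ((of fun i : Fin k => WithLp.ofLp (v i)).submatrix id g) ^ 2) := by
  rw [gvol, ← det_mul_transpose_eq_sum_sq]
  congr 2
  ext i j
  simp [EuclideanSpace.inner_eq_star_dotProduct, mul_apply, dotProduct, mul_comm]

theorem gvol_toEuclideanLin_diagonal (s : Fin n → ℝ) (w : ℕ → EuclideanSpace ℝ (Fin n)) :
    gvol k (fun i => toEuclideanLin (diagonal s) (w i)) = √(∑ g : Fin k → Fin n with StrictMono g,
      ((∏ i, s (g i)) * det ((of fun i : Fin k => WithLp.ofLp (w i)).submatrix id g)) ^ 2) := by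
  rw [gvol_eq_sqrt_sum_sq_det]
  refine congrArg _ (Finset.sum_congr rfl fun g _ => ?_)
  rw [← det_mul_row]
  congr 3
  ext i j
  simp [mulVec_diagonal]

end GramVolume

namespace Fin

variable {k n : ℕ} {g : Fin k → Fin n}

theorem val_le_val_apply_of_strictMono (hg : StrictMono g) (i : Fin k) : (i : ℕ) ≤ g i := by
  simpa using Finset.card_le_card_of_injOn (s := Finset.Iio i) (t := Finset.Iio (g i)) g
    (fun j hj => by simpa using hg (by simpa using hj)) hg.injective.injOn

theorem val_apply_le_sub_add_of_strictMono (hg : StrictMono g) (i : Fin k) : (g i : ℕ) ≤ n - k + i := by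
  have hIoi := Finset.card_le_card_of_injOn (s := Finset.Ioi i) (t := Finset.Ioi (g i)) g
    (fun j hj => by simpa using hg (by simpa using hj)) hg.injective.injOn
  simp only [card_Ioi] at hIoi
  have := val_le_val_apply_of_strictMono hg i
  omega

end Fin

section SingularValues

variable {k n : ℕ} {σ : ℕ → ℝ} {g : Fin k → Fin n}

theorem prod_comp_strictMono_le_prod_range (hσ : ∀ i < n, 0 ≤ σ i)
    (hanti : AntitoneOn σ (Set.Iio n)) (hg : StrictMono g) :
    ∏ i, σ (g i) ≤ ∏ i ∈ range k, σ i := by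
  rw [← Fin.prod_univ_eq_prod_range]
  refine prod_le_prod (fun i _ => hσ _ (g i).2) fun i _ => ?_
  have hi := Fin.val_le_val_apply_of_strictMono hg i
  exact hanti (Set.mem_Iio.mpr (by omega)) (Set.mem_Iio.mpr (g i).2) hi

theorem prod_Ico_le_prod_comp_strictMono (hσ : ∀ i < n, 0 ≤ σ i)
    (hanti : AntitoneOn σ (Set.Iio n)) (hg : StrictMono g) :
    ∏ i ∈ Ico (n - k) n, σ i ≤ ∏ i, σ (g i) := by
  have hkn := Fin.le_of_injective g hg.injective
  rw [prod_Ico_eq_prod_range, show n - (n - k) = k by omega, ← Fin.prod_univ_eq_prod_range]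
  refine prod_le_prod (fun i _ => hσ _ (by omega)) fun i _ => ?_
  exact hanti (Set.mem_Iio.mpr (g i).2) (Set.mem_Iio.mpr (by omega))
    (Fin.val_apply_le_sub_add_of_strictMono hg i)

end SingularValues

section DiagonalBounds

open Matrix

variable {k n : ℕ} {s : Fin n → ℝ}

theorem gvol_toEuclideanLin_diagonal_le {c : ℝ} (hc : 0 ≤ c)
    (hs : ∀ g : Fin k → Fin n, StrictMono g → |∏ i, s (g i)| ≤ c)
    (w : ℕ → EuclideanSpace ℝ (Fin n)) :
    gvol k (fun i => toEuclideanLin (diagonal s) (w i)) ≤ c * gvol k w := by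
  rw [gvol_toEuclideanLin_diagonal, gvol_eq_sqrt_sum_sq_det, ← Real.sqrt_sq hc,
    ← Real.sqrt_mul (sq_nonneg c), mul_sum]
  refine Real.sqrt_le_sqrt (sum_le_sum fun g hg => ?_)
  rw [mul_pow, ← sq_abs (∏ i, s (g i))]
  exact mul_le_mul_of_nonneg_right
    (pow_le_pow_left₀ (abs_nonneg _) (hs g (mem_filter.mp hg).2) 2) (sq_nonneg _)

theorem le_gvol_toEuclideanLin_diagonal {b : ℝ} (hb : 0 ≤ b)
    (hs : ∀ g : Fin k → Fin n, StrictMono g → b ≤ |∏ i, s (g i)|)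
    (w : ℕ → EuclideanSpace ℝ (Fin n)) :
    b * gvol k w ≤ gvol k (fun i => toEuclideanLin (diagonal s) (w i)) := by
  rw [gvol_toEuclideanLin_diagonal, gvol_eq_sqrt_sum_sq_det, ← Real.sqrt_sq hb,
    ← Real.sqrt_mul (sq_nonneg b), mul_sum]
  refine Real.sqrt_le_sqrt (sum_le_sum fun g hg => ?_)
  rw [mul_pow, ← sq_abs (∏ i, s (g i))]
  exact mul_le_mul_of_nonneg_right
    (pow_le_pow_left₀ hb (hs g (mem_filter.mp hg).2) 2) (sq_nonneg _)

end DiagonalBounds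

open Matrix in
theorem vol_map_le_of_singular_values_general
    (n : ℕ) (L : EuclideanSpace ℝ (Fin n) →ₗ[ℝ] EuclideanSpace ℝ (Fin n))
    (σ : ℕ → ℝ)
    (hσpos : ∀ i < n, 0 < σ i)
    (hσmono : ∀ i j, i ≤ j → j < n → σ j ≤ σ i)
    (U V : Matrix (Fin n) (Fin n) ℝ)
    (hU : U ∈ Matrix.orthogonalGroup (Fin n) ℝ)
    (hV : V ∈ Matrix.orthogonalGroup (Fin n) ℝ)
    (hfac : Matrix.toEuclideanLin (U * Matrix.diagonal (fun i : Fin n => σ i) * V) = L)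
    (k : ℕ) (hkn : k ≤ n) (v : ℕ → EuclideanSpace ℝ (Fin n)) :
    (∏ i ∈ Finset.Ico (n - k) n, σ i) * gvol k v ≤ gvol k (fun i => L (v i)) ∧
      gvol k (fun i => L (v i)) ≤ (∏ i ∈ Finset.range k, σ i) * gvol k v := by
  set D := toEuclideanLin (diagonal fun i : Fin n => σ i)
  set w := fun i => toEuclideanLin V (v i)
  have hL : ∀ x, L x = toEuclideanLin U (D (toEuclideanLin V x)) := fun x => by
    ext
    simp [D, ← hfac, mulVec_mulVec, Matrix.mul_assoc]
  have hLv : gvol k (fun i => L (v i)) = gvol k (fun i => D (w i)) := by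
    simp only [hL]
    exact gvol_map_of_inner_map_map (inner_toEuclideanLin_toEuclideanLin hU) _
  have hv : gvol k v = gvol k w :=
    (gvol_map_of_inner_map_map (inner_toEuclideanLin_toEuclideanLin hV) v).symm
  have hσ : ∀ i < n, 0 ≤ σ i := fun i hi => (hσpos i hi).le
  have hanti : AntitoneOn σ (Set.Iio n) := fun i _ j hj hij => hσmono i j hij hj
  have hprod : ∀ g : Fin k → Fin n, 0 ≤ ∏ i, σ (g i) := fun g => prod_nonneg fun i _ => hσ _ (g i).2
  rw [hLv, hv]
  refine ⟨le_gvol_toEuclideanLin_diagonal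
      (Finset.prod_nonneg fun i hi => hσ i (Finset.mem_Ico.mp hi).2) (fun g hg => ?_) w,
    gvol_toEuclideanLin_diagonal_le
      (Finset.prod_nonneg fun i hi => hσ i ((Finset.mem_range.mp hi).trans_le hkn))
      (fun g hg => ?_) w⟩
  · rw [abs_of_nonneg (hprod g)]
    exact prod_Ico_le_prod_comp_strictMono hσ hanti hg
  · rw [abs_of_nonneg (hprod g)]
    exact prod_comp_strictMono_le_prod_range hσ hanti hg

/-- **Volume distortion in terms of singular values** (equation (27) of the paper).
Let `L` be an invertible linear map of `EuclideanSpace ℝ (Fin n)` whose matrix factors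
as `U · diag(σ₁,…,σ_n) · V` with `U, V` orthogonal and `σ₁ ≥ σ₂ ≥ ⋯ ≥ σ_n > 0`
(here `σ i` is the `(i+1)`-st singular value, so `σ 0 = σ₁`).  Then for all `1 ≤ k ≤ n`
and all vectors `v₁, …, v_k`:
`σ_{n-k+1} ⋯ σ_n · vol(v₁,…,v_k) ≤ vol(Lv₁,…,Lv_k) ≤ σ₁ ⋯ σ_k · vol(v₁,…,v_k)`. -/
theorem vol_map_le_of_singular_values
    (n : ℕ) (L : EuclideanSpace ℝ (Fin n) →ₗ[ℝ] EuclideanSpace ℝ (Fin n))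
    (hL : Function.Bijective L)
    (σ : ℕ → ℝ)
    (hσpos : ∀ i < n, 0 < σ i)
    (hσmono : ∀ i j, i ≤ j → j < n → σ j ≤ σ i)
    (U V : Matrix (Fin n) (Fin n) ℝ)
    (hU : U ∈ Matrix.orthogonalGroup (Fin n) ℝ)
    (hV : V ∈ Matrix.orthogonalGroup (Fin n) ℝ)
    (hfac : Matrix.toEuclideanLin (U * Matrix.diagonal (fun i : Fin n => σ i) * V) = L)
    (k : ℕ) (hk1 : 1 ≤ k) (hkn : k ≤ n) (v : ℕ → EuclideanSpace ℝ (Fin n)) :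
    (∏ i ∈ Finset.Ico (n - k) n, σ i) * gvol k v ≤ gvol k (fun i => L (v i)) ∧
      gvol k (fun i => L (v i)) ≤ (∏ i ∈ Finset.range k, σ i) * gvol k v :=
  vol_map_le_of_singular_values_general n L σ hσpos hσmono U V hU hV hfac k hkn v
end

section
/- Let n ≥ 3 and let c : ℝ → EuclideanSpace ℝ (Fin n) be a smooth regular curve. Let L be an invertible linear map of EuclideanSpace ℝ (Fin n) with singular values σ₁ ≥ ⋯ ≥ σ_n > 0 (i.e. the matrix of L factors as U · diag(σ) · V with U, V orthogonal), let λ ∈ EuclideanSpace ℝ (Fin n), and set c̃(t) = Lc(t) + λ. For 1 ≤ r ≤ n−2 let K_r(c,t) = vol(c'(t),…,c^{(r−1)}(t)) · vol(c'(t),…,c^{(r+1)}(t)) / (vol(c'(t),…,c^{(r)}(t))² · ‖c'(t)‖) denote the r-th curvature. Then for every t and every 1 ≤ r ≤ n−2: (σ_{n−r} σ_{n−r+1} σ_{n−r+2}² ⋯ σ_n²)/(σ₁³ σ₂² ⋯ σ_r²) · K_r(c,t) ≤ K_r(c̃,t) ≤ (σ₁² ⋯ σ_{r−1}² σ_r σ_{r+1})/(σ_{n−r+1}²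 ⋯ σ_{n−1}² σ_n³) · K_r(c,t). -/
open scoped RealInnerProductSpace

/-- `curvK r c t` is the `r`-th curvature of the curve `c` at `t`, expressed by the
volume formula of the paper's main theorem:
`K_r(c,t) = vol(c',…,c^{(r-1)}) · vol(c',…,c^{(r+1)}) / (vol(c',…,c^{(r)})² · ‖c'(t)‖)`. -/
noncomputable def curvK {n : ℕ} (r : ℕ) (c : ℝ → EuclideanSpace ℝ (Fin n)) (t : ℝ) : ℝ :=
  gvol (r - 1) (curveDerivs c t) * gvol (r + 1) (curveDerivs c t)
    / ((gvol r (curveDerivs c t)) ^ 2 * ‖deriv c t‖)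

open Finset Matrix Equiv

variable {n k : ℕ}

/-- Expansion of `det` by multilinearity in the rows. -/
lemma det_expand (w : Fin n → ℝ) (B : Matrix (Fin n) (Fin k) ℝ) :
    (Bᵀ * Matrix.diagonal w * B).det
      = ∑ g : Fin k → Fin n,
          (∏ i, (w (g i) * B (g i) i)) * (B.submatrix g id).det := by
  have hM : (Bᵀ * Matrix.diagonal w * B)
      = Matrix.of (fun i : Fin k => ∑ m, (w m * B m i) • (fun j' : Fin k => B m j')) := by
    ext i j
    simp [Matrix.mul_apply, Matrix.mul_diagonal, Matrix.transpose_apply, Finset.sum_apply,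
      Matrix.diagonal_apply, mul_ite, mul_zero, Finset.sum_ite_eq', mul_comm, mul_assoc,
      mul_left_comm]
  rw [hM]
  rw [show (Matrix.of (fun i : Fin k => ∑ m, (w m * B m i) • (fun j' : Fin k => B m j'))).det
      = (Matrix.detRowAlternating : (Fin k → ℝ) [⋀^Fin k]→ₗ[ℝ] ℝ).toMultilinearMap
          (fun i => ∑ m, (w m * B m i) • (fun j' : Fin k => B m j')) from rfl]
  rw [MultilinearMap.map_sum]
  refine Finset.sum_congr rfl fun g _ => ?_
  rw [MultilinearMap.map_smul_univ]
  rfl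

/-- The map `(s, π) ↦ orderEmbOfFin s ∘ π` from pairs (size-`k` subset, permutation)
to injective functions is bijective. -/
lemma pairs_bij :
    Function.Bijective (fun p : {s : Finset (Fin n) // s.card = k} × Equiv.Perm (Fin k) =>
      (⟨(p.1.1.orderEmbOfFin p.1.2) ∘ p.2, ((p.1.1.orderEmbOfFin p.1.2).injective.comp
        p.2.injective)⟩ : {g : Fin k → Fin n // Function.Injective g})) := by
  rw [Fintype.bijective_iff_injective_and_card]
  constructor
  · rintro ⟨⟨s1, h1⟩, π1⟩ ⟨⟨s2, h2⟩, π2⟩ h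
    have hf : (s1.orderEmbOfFin h1) ∘ π1 = (s2.orderEmbOfFin h2) ∘ π2 :=
      congrArg Subtype.val h
    have hs : s1 = s2 := by
      have h1' : Set.range ((s1.orderEmbOfFin h1) ∘ π1) = (s1 : Set (Fin n)) := by
        rw [Set.range_comp, π1.range_eq_univ, Set.image_univ, Finset.range_orderEmbOfFin]
      have h2' : Set.range ((s2.orderEmbOfFin h2) ∘ π2) = (s2 : Set (Fin n)) := by
        rw [Set.range_comp, π2.range_eq_univ, Set.image_univ, Finset.range_orderEmbOfFin]
      have := h1'.symm.trans (hf ▸ h2')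
      exact_mod_cast Finset.coe_injective this
    subst hs
    have hee : s1.orderEmbOfFin h1 = s1.orderEmbOfFin h2 := by congr!
    have hπ : π1 = π2 := by
      apply Equiv.ext
      intro i
      have := congrFun hf i
      simp only [Function.comp_apply, hee] at this
      exact (s1.orderEmbOfFin h2).injective this
    simp [hπ]
  · rw [Fintype.card_congr (Equiv.subtypeInjectiveEquivEmbedding (Fin k) (Fin n)),
      Fintype.card_prod, Fintype.card_finset_len, Fintype.card_embedding_eq,
      Nat.descFactorial_eq_factorial_mul_choose, Fintype.card_perm]
    simp [Fintype.card_fin, mul_comm]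

/-- Weighted Cauchy–Binet identity for `Bᵀ D B`. -/
lemma det_conj_diag (w : Fin n → ℝ) (B : Matrix (Fin n) (Fin k) ℝ) :
    (Bᵀ * Matrix.diagonal w * B).det
      = ∑ p : {s : Finset (Fin n) // s.card = k},
          (∏ m ∈ p.1, w m) * (B.submatrix (p.1.orderEmbOfFin p.2) id).det ^ 2 := by
  classical
  rw [det_expand]
  set F : (Fin k → Fin n) → ℝ :=
    fun g => (∏ i, (w (g i) * B (g i) i)) * (B.submatrix g id).det with hF
  have hzero : ∀ g : Fin k → Fin n, ¬ Function.Injective g → F g = 0 := by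
    intro g hg
    rw [Function.not_injective_iff] at hg
    obtain ⟨a, b, hab, hne⟩ := hg
    have : (B.submatrix g id).det = 0 :=
      Matrix.det_zero_of_row_eq hne (by funext j; simp [Matrix.submatrix_apply, hab])
    simp [hF, this]
  have hsplit : ∑ g : Fin k → Fin n, F g
      = ∑ g : {g : Fin k → Fin n // Function.Injective g}, F g.1 := by
    rw [← Finset.sum_subtype (Finset.univ.filter (fun g : Fin k → Fin n => Function.Injective g))
      (by intro g; simp) F]
    rw [Finset.sum_filter]
    refine Finset.sum_congr rfl fun g _ => ?_
    by_cases hg : Function.Injective g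
    · simp [hg]
    · simp [hg, hzero g hg]
  rw [hsplit, ← Fintype.sum_bijective _ pairs_bij _ _ (fun p => rfl)]
  rw [Fintype.sum_prod_type]
  refine Finset.sum_congr rfl fun s _ => ?_
  -- inner sum over permutations
  set f := s.1.orderEmbOfFin s.2 with hf
  have key : ∀ π : Equiv.Perm (Fin k),
      F (f ∘ π) = (∏ m ∈ s.1, w m) *
        ((Equiv.Perm.sign π : ℤ) * (∏ i, B (f (π i)) i)) * (B.submatrix (⇑f) id).det := by
    intro π
    have h1 : ∏ i, (w ((f ∘ π) i) * B ((f ∘ π) i) i)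
        = (∏ i, w (f (π i))) * ∏ i, B (f (π i)) i := by
      rw [← Finset.prod_mul_distrib]; rfl
    have h2 : (∏ i, w (f (π i))) = ∏ i, w (f i) := Equiv.prod_comp π (fun i => w (f i))
    have h3 : (∏ i, w (f i)) = ∏ m ∈ s.1, w m := by
      rw [← Finset.prod_coe_sort s.1 w]
      rw [← Equiv.prod_comp (s.1.orderIsoOfFin s.2).toEquiv (fun x : s.1 => w x)]
      rfl
    have h4 : (B.submatrix (f ∘ π) id).det
        = (Equiv.Perm.sign π : ℤ) * (B.submatrix (⇑f) id).det := by
      have : B.submatrix (f ∘ π) id = (B.submatrix (⇑f) id).submatrix π id := by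
        rw [Matrix.submatrix_submatrix]; rfl
      rw [this, Matrix.det_permute]
    rw [hF]
    simp only [Function.comp_apply] at h1 ⊢
    rw [h1, h2, h3, h4]
    ring
  calc ∑ π : Equiv.Perm (Fin k), F (f ∘ π)
      = (∏ m ∈ s.1, w m) * ((∑ π : Equiv.Perm (Fin k),
          (Equiv.Perm.sign π : ℤ) * ∏ i, (B.submatrix (⇑f) id) (π i) i)
            * (B.submatrix (⇑f) id).det) := by
        simp only [key, Matrix.submatrix_apply, id_eq]
        rw [← Finset.sum_mul, ← Finset.mul_sum, mul_assoc]
    _ = (∏ m ∈ s.1, w m) * (B.submatrix (⇑f) id).det ^ 2 := by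
        rw [← Matrix.det_apply']
        ring

lemma fin_strictMono_le {f : Fin k → Fin n} (hf : StrictMono f) : ∀ i : Fin k, (i : ℕ) ≤ f i := by
  have : ∀ m : ℕ, ∀ h : m < k, m ≤ (f ⟨m, h⟩ : ℕ) := by
    intro m
    induction m with
    | zero => intro h; exact Nat.zero_le _
    | succ m ih =>
      intro h
      have hm : m < k := Nat.lt_of_succ_lt h
      have h1 : f ⟨m, hm⟩ < f ⟨m + 1, h⟩ := hf (by simp [Fin.mk_lt_mk])
      have := ih hm
      have : (f ⟨m, hm⟩ : ℕ) < (f ⟨m+1, h⟩ : ℕ) := h1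
      omega
  intro i
  simpa using this i.1 i.2

lemma fin_strictMono_ge (hkn : k ≤ n) {f : Fin k → Fin n} (hf : StrictMono f) :
    ∀ i : Fin k, (f i : ℕ) ≤ n - k + i := by
  intro i
  have hmono : StrictMono (fun j : Fin k => (f j.rev).rev) := by
    intro a b hab
    simp only []
    rw [Fin.rev_lt_rev]
    exact hf (by rw [Fin.rev_lt_rev]; exact hab)
  have h := fin_strictMono_le hmono i.rev
  simp only [Fin.rev_rev] at h
  rw [Fin.val_rev, Fin.val_rev] at h
  have h1 : (i : ℕ) < k := i.2
  have h2 : (f i : ℕ) < n := (f i).2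
  omega

section prodBounds
variable {σ : ℕ → ℝ}

lemma prod_subset_le (hσpos : ∀ i < n, 0 < σ i) (hσmono : ∀ i j, i ≤ j → j < n → σ j ≤ σ i)
    (s : Finset (Fin n)) (hs : s.card = k) :
    ∏ m ∈ s, σ (m : ℕ) ^ 2 ≤ ∏ i ∈ Finset.range k, σ i ^ 2 := by
  have h1 : ∏ m ∈ s, σ (m : ℕ) ^ 2 = ∏ i : Fin k, σ (s.orderEmbOfFin hs i : ℕ) ^ 2 := by
    rw [← Finset.prod_coe_sort s (fun m => σ (m : ℕ) ^ 2),
      ← Equiv.prod_comp (s.orderIsoOfFin hs).toEquiv (fun x : s => σ (x : ℕ) ^ 2)]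
    rfl
  have hkn : k ≤ n := by
    rw [← hs]; simpa using Finset.card_le_card (Finset.subset_univ s)
  rw [h1, ← Fin.prod_univ_eq_prod_range (fun i => σ i ^ 2) k]
  refine Finset.prod_le_prod (fun i _ => sq_nonneg _) (fun i _ => ?_)
  have hle : (i : ℕ) ≤ (s.orderEmbOfFin hs i : ℕ) :=
    fin_strictMono_le (s.orderEmbOfFin hs).strictMono i
  have hlt : ((s.orderEmbOfFin hs i : Fin n) : ℕ) < n := (s.orderEmbOfFin hs i).2
  have := hσmono i (s.orderEmbOfFin hs i : ℕ) hle hlt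
  have h0 : 0 ≤ σ (s.orderEmbOfFin hs i : ℕ) := (hσpos _ hlt).le
  exact pow_le_pow_left₀ h0 this 2

lemma prod_subset_ge (hσpos : ∀ i < n, 0 < σ i) (hσmono : ∀ i j, i ≤ j → j < n → σ j ≤ σ i)
    (s : Finset (Fin n)) (hs : s.card = k) :
    ∏ i ∈ Finset.Ico (n - k) n, σ i ^ 2 ≤ ∏ m ∈ s, σ (m : ℕ) ^ 2 := by
  have hkn : k ≤ n := by
    rw [← hs]; simpa using Finset.card_le_card (Finset.subset_univ s)
  have h1 : ∏ m ∈ s, σ (m : ℕ) ^ 2 = ∏ i : Fin k, σ (s.orderEmbOfFin hs i : ℕ) ^ 2 := by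
    rw [← Finset.prod_coe_sort s (fun m => σ (m : ℕ) ^ 2),
      ← Equiv.prod_comp (s.orderIsoOfFin hs).toEquiv (fun x : s => σ (x : ℕ) ^ 2)]
    rfl
  have h2 : ∏ i ∈ Finset.Ico (n - k) n, σ i ^ 2 = ∏ i ∈ Finset.range k, σ (n - k + i) ^ 2 := by
    have hnk : n - (n - k) = k := by omega
    rw [Finset.prod_Ico_eq_prod_range, hnk]
  rw [h1, h2, ← Fin.prod_univ_eq_prod_range (fun i => σ (n - k + i) ^ 2) k]
  refine Finset.prod_le_prod (fun i _ => sq_nonneg _) (fun i _ => ?_)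
  have hge : ((s.orderEmbOfFin hs i : Fin n) : ℕ) ≤ n - k + i :=
    fin_strictMono_ge hkn (s.orderEmbOfFin hs).strictMono i
  have hlt : n - k + (i : ℕ) < n := by have := i.2; omega
  have := hσmono _ _ hge hlt
  exact pow_le_pow_left₀ (hσpos _ hlt).le this 2

end prodBounds

section detBounds
variable {σ : ℕ → ℝ}

lemma det_conj_diag_bounds (hσpos : ∀ i < n, 0 < σ i)
    (hσmono : ∀ i j, i ≤ j → j < n → σ j ≤ σ i) (B : Matrix (Fin n) (Fin k) ℝ) :
    (∏ i ∈ Finset.Ico (n - k) n, σ i ^ 2) * (Bᵀ * B).det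
      ≤ (Bᵀ * Matrix.diagonal (fun m : Fin n => σ (m : ℕ) ^ 2) * B).det
    ∧ (Bᵀ * Matrix.diagonal (fun m : Fin n => σ (m : ℕ) ^ 2) * B).det
      ≤ (∏ i ∈ Finset.range k, σ i ^ 2) * (Bᵀ * B).det := by
  have hBB : (Bᵀ * B).det
      = ∑ p : {s : Finset (Fin n) // s.card = k},
          (B.submatrix (p.1.orderEmbOfFin p.2) id).det ^ 2 := by
    have := det_conj_diag (fun _ : Fin n => (1 : ℝ)) B
    simpa using this
  rw [det_conj_diag (fun m : Fin n => σ (m : ℕ) ^ 2) B, hBB, Finset.mul_sum, Finset.mul_sum]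
  constructor
  · refine Finset.sum_le_sum fun p _ => ?_
    exact mul_le_mul_of_nonneg_right (prod_subset_ge hσpos hσmono p.1 p.2) (sq_nonneg _)
  · refine Finset.sum_le_sum fun p _ => ?_
    exact mul_le_mul_of_nonneg_right (prod_subset_le hσpos hσmono p.1 p.2) (sq_nonneg _)

end detBounds

open scoped RealInnerProductSpace

/-- coordinate matrix of the first `k` vectors of a family. -/
noncomputable def coordMat (n k : ℕ) (v : ℕ → EuclideanSpace ℝ (Fin n)) :
    Matrix (Fin n) (Fin k) ℝ :=
  Matrix.of fun m i => v (i : ℕ) m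

lemma gram_eq_coordMat (v : ℕ → EuclideanSpace ℝ (Fin n)) :
    (Matrix.of fun i j : Fin k => ⟪v (i : ℕ), v (j : ℕ)⟫)
      = (coordMat n k v)ᵀ * coordMat n k v := by
  ext i j
  simp [Matrix.mul_apply, coordMat, PiLp.inner_apply, RCLike.inner_apply, Matrix.transpose_apply]
  exact Finset.sum_congr rfl fun _ _ => mul_comm _ _

lemma coordMat_comp (M : Matrix (Fin n) (Fin n) ℝ) (v : ℕ → EuclideanSpace ℝ (Fin n)) :
    coordMat n k (fun i => Matrix.toEuclideanLin M (v i)) = M * coordMat n k v := by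
  ext m i
  simp [coordMat, Matrix.toEuclideanLin_apply, Matrix.mul_apply, Matrix.mulVec,
    dotProduct]

lemma det_TT_nonneg (B : Matrix (Fin n) (Fin k) ℝ) : 0 ≤ (Bᵀ * B).det := by
  have hBB : (Bᵀ * B).det
      = ∑ p : {s : Finset (Fin n) // s.card = k},
          (B.submatrix (p.1.orderEmbOfFin p.2) id).det ^ 2 := by
    have := det_conj_diag (fun _ : Fin n => (1 : ℝ)) B
    simpa using this
  rw [hBB]
  exact Finset.sum_nonneg fun p _ => sq_nonneg _

lemma gvol_eq_sqrt_det (v : ℕ → EuclideanSpace ℝ (Fin n)) :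
    gvol k v = Real.sqrt ((coordMat n k v)ᵀ * coordMat n k v).det := by
  rw [gvol, gram_eq_coordMat]

lemma gvol_comp_bounds {σ : ℕ → ℝ} (hkn : k ≤ n) (hσpos : ∀ i < n, 0 < σ i)
    (hσmono : ∀ i j, i ≤ j → j < n → σ j ≤ σ i)
    (U V : Matrix (Fin n) (Fin n) ℝ)
    (hU : U ∈ Matrix.orthogonalGroup (Fin n) ℝ) (hV : V ∈ Matrix.orthogonalGroup (Fin n) ℝ)
    (v : ℕ → EuclideanSpace ℝ (Fin n)) :
    (∏ i ∈ Finset.Ico (n - k) n, σ i) * gvol k v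
      ≤ gvol k (fun i => Matrix.toEuclideanLin
          (U * Matrix.diagonal (fun i : Fin n => σ i) * V) (v i))
    ∧ gvol k (fun i => Matrix.toEuclideanLin
          (U * Matrix.diagonal (fun i : Fin n => σ i) * V) (v i))
      ≤ (∏ i ∈ Finset.range k, σ i) * gvol k v := by
  classical
  set D : Matrix (Fin n) (Fin n) ℝ := Matrix.diagonal (fun i : Fin n => σ (i : ℕ)) with hD
  set B : Matrix (Fin n) (Fin k) ℝ := coordMat n k v with hB
  set C : Matrix (Fin n) (Fin k) ℝ := V * B with hC
  have hVV : Vᵀ * V = 1 := by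
    have := (Matrix.mem_orthogonalGroup_iff' (Fin n) ℝ).mp hV
    exact this
  have hUU : Uᵀ * U = 1 := by
    have := (Matrix.mem_orthogonalGroup_iff' (Fin n) ℝ).mp hU
    exact this
  have hCC : Cᵀ * C = Bᵀ * B := by
    rw [hC, Matrix.transpose_mul, Matrix.mul_assoc, ← Matrix.mul_assoc Vᵀ V B, hVV,
      Matrix.one_mul]
  have hgram2 : (coordMat n k (fun i => Matrix.toEuclideanLin (U * D * V) (v i)))ᵀ
        * coordMat n k (fun i => Matrix.toEuclideanLin (U * D * V) (v i))
      = Cᵀ * Matrix.diagonal (fun m : Fin n => σ (m : ℕ) ^ 2) * C := by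
    rw [coordMat_comp, ← hB]
    have h1 : (U * D * V * B)ᵀ = Bᵀ * Vᵀ * Dᵀ * Uᵀ := by
      simp [Matrix.transpose_mul, Matrix.mul_assoc]
    rw [h1, hD, Matrix.diagonal_transpose]
    calc Bᵀ * Vᵀ * Matrix.diagonal (fun i : Fin n => σ (i : ℕ)) * Uᵀ
          * (U * Matrix.diagonal (fun i : Fin n => σ (i : ℕ)) * V * B)
        = Bᵀ * Vᵀ * Matrix.diagonal (fun i : Fin n => σ (i : ℕ)) * (Uᵀ * U)
            * Matrix.diagonal (fun i : Fin n => σ (i : ℕ)) * V * B := by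
          simp only [Matrix.mul_assoc]
      _ = Bᵀ * Vᵀ * (Matrix.diagonal (fun i : Fin n => σ (i : ℕ))
            * Matrix.diagonal (fun i : Fin n => σ (i : ℕ))) * V * B := by
          rw [hUU, Matrix.mul_one]
          simp only [Matrix.mul_assoc]
      _ = (V * B)ᵀ * Matrix.diagonal (fun m : Fin n => σ (m : ℕ) ^ 2) * (V * B) := by
          rw [Matrix.diagonal_mul_diagonal, Matrix.transpose_mul]
          simp only [Matrix.mul_assoc, ← sq]
  have hdetbounds := det_conj_diag_bounds (k := k) hσpos hσmono C
  have hdetC : 0 ≤ (Cᵀ * C).det := det_TT_nonneg C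
  have hgv : gvol k v = Real.sqrt ((Cᵀ * C).det) := by
    rw [gvol_eq_sqrt_det, hCC]
  have hgvL : gvol k (fun i => Matrix.toEuclideanLin (U * D * V) (v i))
      = Real.sqrt ((Cᵀ * Matrix.diagonal (fun m : Fin n => σ (m : ℕ) ^ 2) * C).det) := by
    rw [gvol_eq_sqrt_det, hgram2]
  have hprodIco : 0 ≤ ∏ i ∈ Finset.Ico (n - k) n, σ i :=
    Finset.prod_nonneg fun i hi => (hσpos i (Finset.mem_Ico.mp hi).2).le
  have hprodR : 0 ≤ ∏ i ∈ Finset.range k, σ i :=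
    Finset.prod_nonneg fun i hi => (hσpos i (lt_of_lt_of_le (Finset.mem_range.mp hi) hkn)).le
  have hsqIco : ∏ i ∈ Finset.Ico (n - k) n, σ i ^ 2
      = (∏ i ∈ Finset.Ico (n - k) n, σ i) ^ 2 := by rw [Finset.prod_pow]
  have hsqR : ∏ i ∈ Finset.range k, σ i ^ 2
      = (∏ i ∈ Finset.range k, σ i) ^ 2 := by rw [Finset.prod_pow]
  constructor
  · rw [hgv, hgvL]
    calc (∏ i ∈ Finset.Ico (n - k) n, σ i) * Real.sqrt ((Cᵀ * C).det)
        = Real.sqrt ((∏ i ∈ Finset.Ico (n - k) n, σ i ^ 2) * (Cᵀ * C).det) := by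
          rw [hsqIco, Real.sqrt_mul (by positivity), Real.sqrt_sq hprodIco]
      _ ≤ _ := Real.sqrt_le_sqrt hdetbounds.1
  · rw [hgv, hgvL]
    calc Real.sqrt ((Cᵀ * Matrix.diagonal (fun m : Fin n => σ (m : ℕ) ^ 2) * C).det)
        ≤ Real.sqrt ((∏ i ∈ Finset.range k, σ i ^ 2) * (Cᵀ * C).det) :=
          Real.sqrt_le_sqrt hdetbounds.2
      _ = (∏ i ∈ Finset.range k, σ i) * Real.sqrt ((Cᵀ * C).det) := by
          rw [hsqR, Real.sqrt_mul (by positivity), Real.sqrt_sq hprodR]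

lemma gvol_nonneg {E : Type*} [NormedAddCommGroup E] [InnerProductSpace ℝ E]
    (k : ℕ) (v : ℕ → E) : 0 ≤ gvol k v := Real.sqrt_nonneg _

lemma gram_posDef {E : Type*} [NormedAddCommGroup E] [InnerProductSpace ℝ E]
    {k : ℕ} {v : ℕ → E} (hv : LinearIndependent ℝ (fun i : Fin k => v (i : ℕ))) :
    (Matrix.of fun i j : Fin k => ⟪v (i : ℕ), v (j : ℕ)⟫ : Matrix (Fin k) (Fin k) ℝ).PosDef := by
  rw [Matrix.posDef_iff_dotProduct_mulVec]
  constructor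
  · ext i j
    simp [Matrix.conjTranspose_apply, real_inner_comm]
  · intro x hx
    have hy : (∑ i, x i • v (i : ℕ)) ≠ 0 := by
      intro h
      refine hx (funext fun i => ?_)
      exact Fintype.linearIndependent_iff.mp hv x h i
    have hne : ⟪∑ i, x i • v (i : ℕ), ∑ j, x j • v (j : ℕ)⟫ ≠ 0 := by
      intro h
      exact hy (inner_self_eq_zero.mp h)
    have hpos : (0 : ℝ) < ⟪∑ i, x i • v (i : ℕ), ∑ j, x j • v (j : ℕ)⟫ :=
      lt_of_le_of_ne real_inner_self_nonneg (Ne.symm hne)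
    have hexp : ⟪∑ i, x i • v (i : ℕ), ∑ j, x j • v (j : ℕ)⟫
        = ∑ i : Fin k, ∑ j : Fin k, x i * (⟪v (i : ℕ), v (j : ℕ)⟫ * x j) := by
      rw [sum_inner]
      refine Finset.sum_congr rfl fun i _ => ?_
      rw [real_inner_smul_left, inner_sum, Finset.mul_sum]
      refine Finset.sum_congr rfl fun j _ => ?_
      rw [real_inner_smul_right]
      ring
    have hdot : dotProduct (star x)
          ((Matrix.of fun i j : Fin k => ⟪v (i : ℕ), v (j : ℕ)⟫) *ᵥ x)
        = ∑ i : Fin k, ∑ j : Fin k, x i * (⟪v (i : ℕ), v (j : ℕ)⟫ * x j) := by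
      simp [dotProduct, Matrix.mulVec, Finset.mul_sum]
    rw [hdot, ← hexp]
    exact hpos

lemma gvol_pos {E : Type*} [NormedAddCommGroup E] [InnerProductSpace ℝ E]
    {k : ℕ} {v : ℕ → E} (hv : LinearIndependent ℝ (fun i : Fin k => v (i : ℕ))) :
    0 < gvol k v :=
  Real.sqrt_pos.mpr (gram_posDef hv).det_pos

lemma gvol_one_eq_norm {E : Type*} [NormedAddCommGroup E] [InnerProductSpace ℝ E]
    (v : ℕ → E) : gvol 1 v = ‖v 0‖ := by
  rw [gvol]
  rw [Matrix.det_fin_one]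
  rw [Matrix.of_apply]
  rw [show ((0 : Fin 1) : ℕ) = 0 from rfl]
  rw [real_inner_self_eq_norm_mul_norm]
  exact Real.sqrt_mul_self (norm_nonneg _)

lemma gvol_congr {E : Type*} [NormedAddCommGroup E] [InnerProductSpace ℝ E]
    {k : ℕ} {v w : ℕ → E} (h : ∀ i, v i = w i) : gvol k v = gvol k w := by
  rw [gvol, gvol]
  simp only [h]

section derivs

lemma iteratedDeriv_add_const' {F : Type*} [NormedAddCommGroup F] [NormedSpace ℝ F]
    (m : ℕ) (hm : 1 ≤ m) (g : ℝ → F) (lam : F) :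
    iteratedDeriv m (fun s => g s + lam) = iteratedDeriv m g := by
  obtain ⟨m', rfl⟩ : ∃ m', m = m' + 1 := ⟨m - 1, by omega⟩
  rw [iteratedDeriv_succ', iteratedDeriv_succ']
  congr 1
  funext t
  simp

lemma iteratedDeriv_clm_comp {F G : Type*} [NormedAddCommGroup F] [NormedSpace ℝ F]
    [NormedAddCommGroup G] [NormedSpace ℝ G]
    (ℓ : F →L[ℝ] G) {f : ℝ → F} (hf : ContDiff ℝ (⊤ : ℕ∞) f) (m : ℕ) :
    iteratedDeriv m (fun s => ℓ (f s)) = fun t => ℓ (iteratedDeriv m f t) := by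
  induction m with
  | zero => simp [iteratedDeriv_zero]
  | succ m ih =>
    rw [iteratedDeriv_succ, ih, iteratedDeriv_succ]
    funext t
    have hd : DifferentiableAt ℝ (iteratedDeriv m f) t :=
      (hf.differentiable_iteratedDeriv m (by exact_mod_cast ENat.coe_lt_top m)).differentiableAt
    exact (ℓ.hasFDerivAt.comp_hasDerivAt t hd.hasDerivAt).deriv

end derivs


/-- **Theorem 6.6 of the paper (curvature bounds).**  Let `c` be a smooth regular curve
in `ℝⁿ` (`n ≥ 3`), let `L` be an invertible linear map with singular values
`σ₁ ≥ ⋯ ≥ σ_n > 0` (here `σ i` denotes `σ_{i+1}`, so `σ 0 = σ₁`), let `λ` be a vector,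
and let `c̃(t) = Lc(t) + λ`.  Then for `1 ≤ r ≤ n - 2`:
`(σ_{n-r} σ_{n-r+1} σ_{n-r+2}² ⋯ σ_n²)/(σ₁³ σ₂² ⋯ σ_r²) · K_r(c,t) ≤ K_r(c̃,t)`
and `K_r(c̃,t) ≤ (σ₁² ⋯ σ_{r-1}² σ_r σ_{r+1})/(σ_{n-r+1}² ⋯ σ_{n-1}² σ_n³) · K_r(c,t)`. -/
theorem curvature_bounds_of_singular_values
    (n : ℕ) (hn : 3 ≤ n) (c : ℝ → EuclideanSpace ℝ (Fin n))
    (hc : ContDiff ℝ (⊤ : ℕ∞) c)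
    (hreg : ∀ t, LinearIndependent ℝ (fun i : Fin (n - 1) => iteratedDeriv (i + 1) c t))
    (L : EuclideanSpace ℝ (Fin n) →ₗ[ℝ] EuclideanSpace ℝ (Fin n))
    (hL : Function.Bijective L)
    (σ : ℕ → ℝ)
    (hσpos : ∀ i < n, 0 < σ i)
    (hσmono : ∀ i j, i ≤ j → j < n → σ j ≤ σ i)
    (U V : Matrix (Fin n) (Fin n) ℝ)
    (hU : U ∈ Matrix.orthogonalGroup (Fin n) ℝ)
    (hV : V ∈ Matrix.orthogonalGroup (Fin n) ℝ)
    (hfac : Matrix.toEuclideanLin (U * Matrix.diagonal (fun i : Fin n => σ i) * V) = L)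
    (lam : EuclideanSpace ℝ (Fin n)) :
    ∀ t : ℝ, ∀ r : ℕ, 1 ≤ r → r ≤ n - 2 →
      σ (n - r - 1) * σ (n - r) * (∏ i ∈ Finset.Ico (n - r + 1) n, σ i ^ 2)
          / (σ 0 ^ 3 * ∏ i ∈ Finset.Ico 1 r, σ i ^ 2) * curvK r c t
        ≤ curvK r (fun s => L (c s) + lam) t
      ∧ curvK r (fun s => L (c s) + lam) t
        ≤ (∏ i ∈ Finset.range (r - 1), σ i ^ 2) * σ (r - 1) * σ r
            / ((∏ i ∈ Finset.Ico (n - r) (n - 1), σ i ^ 2) * σ (n - 1) ^ 3)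
              * curvK r c t := by
  intro t r hr1 hr2
  set d : ℕ → EuclideanSpace ℝ (Fin n) := curveDerivs c t with hd
  -- derivative transfer
  have hct : ∀ i : ℕ, curveDerivs (fun s => L (c s) + lam) t i = L (d i) := by
    intro i
    set ℓ : EuclideanSpace ℝ (Fin n) →L[ℝ] EuclideanSpace ℝ (Fin n) :=
      LinearMap.toContinuousLinearMap L with hℓ
    have hfun : (fun s => L (c s) + lam) = (fun s => ℓ (c s) + lam) := by
      funext s; simp [hℓ]
    show iteratedDeriv (i + 1) (fun s => L (c s) + lam) t = L (d i)
    rw [hfun, iteratedDeriv_add_const' (i + 1) (by omega),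
      iteratedDeriv_clm_comp ℓ hc (i + 1)]
    simp [hℓ, hd, curveDerivs]
  have hderiv : deriv (fun s => L (c s) + lam) t = L (d 0) := by
    have h0 := hct 0
    rw [curveDerivs] at h0
    rw [← iteratedDeriv_one]
    exact h0
  -- linear independence of initial segments
  have hli : ∀ k : ℕ, k ≤ n - 1 → LinearIndependent ℝ (fun i : Fin k => d (i : ℕ)) := by
    intro k hk
    exact (hreg t).comp (fun i : Fin k => Fin.castLE hk i) (Fin.castLE_injective hk)
  -- positivity
  have hA1 : 0 < gvol (r - 1) d := gvol_pos (hli (r - 1) (by omega))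
  have hA2 : 0 < gvol r d := gvol_pos (hli r (by omega))
  have hA3 : 0 < gvol (r + 1) d := gvol_pos (hli (r + 1) (by omega))
  have hd0 : d 0 ≠ 0 := by
    have := (hli 1 (by omega)).ne_zero ⟨0, by omega⟩
    simpa using this
  have hN : 0 < ‖d 0‖ := norm_pos_iff.mpr hd0
  -- volume bounds
  have hvb : ∀ k : ℕ, k ≤ n →
      (∏ i ∈ Finset.Ico (n - k) n, σ i) * gvol k d ≤ gvol k (fun i => L (d i))
      ∧ gvol k (fun i => L (d i)) ≤ (∏ i ∈ Finset.range k, σ i) * gvol k d := by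
    intro k hk
    have h := gvol_comp_bounds hk hσpos hσmono U V hU hV d
    rwa [hfac] at h
  -- rewrite curvK of transformed curve
  have hgv : ∀ k : ℕ, gvol k (curveDerivs (fun s => L (c s) + lam) t)
      = gvol k (fun i => L (d i)) := fun k => gvol_congr hct
  -- products positivity
  have hPm : ∀ k : ℕ, 0 < ∏ i ∈ Finset.Ico (n - k) n, σ i := by
    intro k
    exact Finset.prod_pos fun i hi => hσpos i (Finset.mem_Ico.mp hi).2
  have hPp : ∀ k : ℕ, k ≤ n → 0 < ∏ i ∈ Finset.range k, σ i := by
    intro k hk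
    exact Finset.prod_pos fun i hi => hσpos i (lt_of_lt_of_le (Finset.mem_range.mp hi) hk)
  -- norm bounds via gvol 1
  have hIco1 : Finset.Ico (n - 1) n = {n - 1} := by
    obtain ⟨a, ha⟩ : ∃ a, n = a + 1 := ⟨n - 1, by omega⟩
    subst ha
    simp [Nat.Ico_succ_singleton]
  have hnormlow : σ (n - 1) * ‖d 0‖ ≤ ‖L (d 0)‖ := by
    have h := (hvb 1 (by omega)).1
    rw [gvol_one_eq_norm, gvol_one_eq_norm, hIco1, Finset.prod_singleton] at h
    exact h
  have hnormhigh : ‖L (d 0)‖ ≤ σ 0 * ‖d 0‖ := by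
    have h := (hvb 1 (by omega)).2
    rw [gvol_one_eq_norm, gvol_one_eq_norm, Finset.range_one, Finset.prod_singleton] at h
    exact h
  -- abbreviations
  set A1 := gvol (r - 1) d with hA1d
  set A2 := gvol r d with hA2d
  set A3 := gvol (r + 1) d with hA3d
  set B1 := gvol (r - 1) (fun i => L (d i)) with hB1d
  set B2 := gvol r (fun i => L (d i)) with hB2d
  set B3 := gvol (r + 1) (fun i => L (d i)) with hB3d
  have hB1low := (hvb (r - 1) (by omega)).1
  have hB1high := (hvb (r - 1) (by omega)).2
  have hB2low := (hvb r (by omega)).1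
  have hB2high := (hvb r (by omega)).2
  have hB3low := (hvb (r + 1) (by omega)).1
  have hB3high := (hvb (r + 1) (by omega)).2
  have hB1nn : 0 ≤ B1 := gvol_nonneg _ _
  have hB2nn : 0 ≤ B2 := gvol_nonneg _ _
  have hB3nn : 0 ≤ B3 := gvol_nonneg _ _
  have hB2pos : 0 < B2 := lt_of_lt_of_le (mul_pos (hPm r) hA2) hB2low
  have hNLpos : 0 < ‖L (d 0)‖ :=
    lt_of_lt_of_le (mul_pos (hσpos (n - 1) (by omega)) hN) hnormlow
  have hKt : curvK r (fun s => L (c s) + lam) t = B1 * B3 / (B2 ^ 2 * ‖L (d 0)‖) := by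
    rw [curvK, hgv, hgv, hgv, hderiv]
  have hKc : curvK r c t = A1 * A3 / (A2 ^ 2 * ‖d 0‖) := by
    have : deriv c t = d 0 := by
      rw [hd, curveDerivs, ← iteratedDeriv_one]
    rw [curvK, this]
  -- product identities
  have e1 : ∏ i ∈ Finset.Ico (n - (r - 1)) n, σ i = ∏ i ∈ Finset.Ico (n - r + 1) n, σ i := by
    rw [show n - (r - 1) = n - r + 1 from by omega]
  have e2 : ∏ i ∈ Finset.Ico (n - (r + 1)) n, σ i
      = σ (n - r - 1) * (σ (n - r) * ∏ i ∈ Finset.Ico (n - r + 1) n, σ i) := by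
    rw [show n - (r + 1) = n - r - 1 from by omega]
    rw [Finset.prod_eq_prod_Ico_succ_bot (by omega) σ]
    rw [show n - r - 1 + 1 = n - r from by omega]
    rw [Finset.prod_eq_prod_Ico_succ_bot (show n - r < n from by omega) σ]
  have e3 : ∏ i ∈ Finset.range r, σ i = σ 0 * ∏ i ∈ Finset.Ico 1 r, σ i := by
    rw [Finset.range_eq_Ico, Finset.prod_eq_prod_Ico_succ_bot (by omega) σ]
  have e4 : ∏ i ∈ Finset.range (r + 1), σ i
      = (∏ i ∈ Finset.range (r - 1), σ i) * σ (r - 1) * σ r := by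
    obtain ⟨a, ha⟩ : ∃ a, r = a + 1 := ⟨r - 1, by omega⟩
    subst ha
    rw [Finset.prod_range_succ, Finset.prod_range_succ]
    simp
  have e5 : ∏ i ∈ Finset.Ico (n - r) n, σ i
      = (∏ i ∈ Finset.Ico (n - r) (n - 1), σ i) * σ (n - 1) := by
    obtain ⟨a, ha⟩ : ∃ a, n = a + 1 := ⟨n - 1, by omega⟩
    subst ha
    rw [Finset.prod_Ico_succ_top (by omega)]
    simp
  constructor
  · -- lower bound
    rw [hKt, hKc]
    have hconst : σ (n - r - 1) * σ (n - r) * (∏ i ∈ Finset.Ico (n - r + 1) n, σ i ^ 2)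
          / (σ 0 ^ 3 * ∏ i ∈ Finset.Ico 1 r, σ i ^ 2) * (A1 * A3 / (A2 ^ 2 * ‖d 0‖))
        = ((∏ i ∈ Finset.Ico (n - (r - 1)) n, σ i) * (∏ i ∈ Finset.Ico (n - (r + 1)) n, σ i)
            * (A1 * A3))
          / (((∏ i ∈ Finset.range r, σ i) ^ 2 * σ 0) * (A2 ^ 2 * ‖d 0‖)) := by
      rw [div_mul_div_comm]
      congr 1
      · rw [e1, e2, Finset.prod_pow]; ring
      · rw [e3, Finset.prod_pow]; ring
    rw [hconst]
    refine div_le_div₀ (mul_nonneg hB1nn hB3nn) ?_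
      (mul_pos (pow_pos hB2pos 2) hNLpos) ?_
    · have h1 : (∏ i ∈ Finset.Ico (n - (r - 1)) n, σ i) * A1 ≤ B1 := hB1low
      have h3 : (∏ i ∈ Finset.Ico (n - (r + 1)) n, σ i) * A3 ≤ B3 := hB3low
      calc (∏ i ∈ Finset.Ico (n - (r - 1)) n, σ i) * (∏ i ∈ Finset.Ico (n - (r + 1)) n, σ i)
            * (A1 * A3)
          = ((∏ i ∈ Finset.Ico (n - (r - 1)) n, σ i) * A1)
            * ((∏ i ∈ Finset.Ico (n - (r + 1)) n, σ i) * A3) := by ring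
        _ ≤ B1 * B3 :=
            mul_le_mul h1 h3 (le_of_lt (mul_pos (hPm (r + 1)) hA3)) hB1nn
    · have h2 : B2 ≤ (∏ i ∈ Finset.range r, σ i) * A2 := hB2high
      have h2' : B2 ^ 2 ≤ ((∏ i ∈ Finset.range r, σ i) * A2) ^ 2 :=
        pow_le_pow_left₀ hB2nn h2 2
      calc B2 ^ 2 * ‖L (d 0)‖ ≤ ((∏ i ∈ Finset.range r, σ i) * A2) ^ 2 * (σ 0 * ‖d 0‖) :=
            mul_le_mul h2' hnormhigh (le_of_lt hNLpos) (sq_nonneg _)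
        _ = ((∏ i ∈ Finset.range r, σ i) ^ 2 * σ 0) * (A2 ^ 2 * ‖d 0‖) := by ring
  · -- upper bound
    rw [hKt, hKc]
    have hconst : (∏ i ∈ Finset.range (r - 1), σ i ^ 2) * σ (r - 1) * σ r
          / ((∏ i ∈ Finset.Ico (n - r) (n - 1), σ i ^ 2) * σ (n - 1) ^ 3)
            * (A1 * A3 / (A2 ^ 2 * ‖d 0‖))
        = ((∏ i ∈ Finset.range (r - 1), σ i) * (∏ i ∈ Finset.range (r + 1), σ i)
            * (A1 * A3))
          / (((∏ i ∈ Finset.Ico (n - r) n, σ i) ^ 2 * σ (n - 1)) * (A2 ^ 2 * ‖d 0‖)) := by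
      rw [div_mul_div_comm]
      congr 1
      · rw [e4, Finset.prod_pow]; ring
      · rw [e5, Finset.prod_pow]; ring
    rw [hconst]
    refine div_le_div₀
      (le_of_lt (mul_pos (mul_pos (hPp (r - 1) (by omega)) (hPp (r + 1) (by omega)))
        (mul_pos hA1 hA3)))
      ?_
      (mul_pos (mul_pos (pow_pos (hPm r) 2) (hσpos (n - 1) (by omega)))
        (mul_pos (pow_pos hA2 2) hN))
      ?_
    · have h1 : B1 ≤ (∏ i ∈ Finset.range (r - 1), σ i) * A1 := hB1high
      have h3 : B3 ≤ (∏ i ∈ Finset.range (r + 1), σ i) * A3 := hB3high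
      calc B1 * B3 ≤ ((∏ i ∈ Finset.range (r - 1), σ i) * A1)
            * ((∏ i ∈ Finset.range (r + 1), σ i) * A3) :=
            mul_le_mul h1 h3 hB3nn (le_of_lt (mul_pos (hPp (r - 1) (by omega)) hA1))
        _ = (∏ i ∈ Finset.range (r - 1), σ i) * (∏ i ∈ Finset.range (r + 1), σ i)
            * (A1 * A3) := by ring
    · have h2 : (∏ i ∈ Finset.Ico (n - r) n, σ i) * A2 ≤ B2 := hB2low
      have h2' : ((∏ i ∈ Finset.Ico (n - r) n, σ i) * A2) ^ 2 ≤ B2 ^ 2 :=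
        pow_le_pow_left₀ (le_of_lt (mul_pos (hPm r) hA2)) h2 2
      calc ((∏ i ∈ Finset.Ico (n - r) n, σ i) ^ 2 * σ (n - 1)) * (A2 ^ 2 * ‖d 0‖)
          = ((∏ i ∈ Finset.Ico (n - r) n, σ i) * A2) ^ 2 * (σ (n - 1) * ‖d 0‖) := by ring
        _ ≤ B2 ^ 2 * ‖L (d 0)‖ :=
            mul_le_mul h2' hnormlow (le_of_lt (mul_pos (hσpos (n - 1) (by omega)) hN))
              (sq_nonneg _)
end

section
/- Let n ≥ 2 and let c, c̃ : ℝ → EuclideanSpace ℝ (Fin n) be smooth strongly regular curves defined on a nontrivial interval I. Suppose that for every t ∈ I and every 1 ≤ k ≤ n, ‖c^{(k)}(t)‖ = ‖c̃^{(k)}(t)‖ (equal norms of the first n iterated derivatives). Then there exists an isometry g of EuclideanSpace ℝ (Fin n) (an affine isometry, i.e. g(x) = Ax + b with A a linear isometry) such that c̃(t) = g(c(t)) for all t ∈ I. -/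
open scoped RealInnerProductSpace
open Set Matrix
open Set

lemma gram_eq (n : ℕ) (I : Set ℝ) (hI : I.OrdConnected)
    (hInontriv : ∃ a ∈ I, ∃ b ∈ I, a < b)
    (c c' : ℝ → EuclideanSpace ℝ (Fin n))
    (hc : ContDiff ℝ (⊤ : ℕ∞) c) (hc' : ContDiff ℝ (⊤ : ℕ∞) c')
    (hnorm : ∀ t ∈ I, ∀ k : ℕ, 1 ≤ k → k ≤ n →
      ‖iteratedDeriv k c t‖ = ‖iteratedDeriv k c' t‖) :
    ∀ i j : ℕ, 1 ≤ i → 1 ≤ j → i ≤ n + 1 → j ≤ n + 1 → (i ≤ n ∨ j ≤ n) → ∀ t ∈ I,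
      ⟪iteratedDeriv i c t, iteratedDeriv j c t⟫ = ⟪iteratedDeriv i c' t, iteratedDeriv j c' t⟫ := by
  obtain ⟨a, ha, b, hb, hab⟩ := hInontriv
  set F : ℕ → ℕ → ℝ → ℝ := fun i j t =>
    ⟪iteratedDeriv i c t, iteratedDeriv j c t⟫ - ⟪iteratedDeriv i c' t, iteratedDeriv j c' t⟫ with hF
  have hd : ∀ (f : ℝ → EuclideanSpace ℝ (Fin n)), ContDiff ℝ (⊤ : ℕ∞) f → ∀ (k : ℕ) (t : ℝ),
      HasDerivAt (iteratedDeriv k f) (iteratedDeriv (k+1) f t) t := by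
    intro f hf k t
    rw [iteratedDeriv_succ]
    exact ((hf.differentiable_iteratedDeriv k (by exact_mod_cast lt_top_iff_ne_top.2 (by simp))) t).hasDerivAt
  have hder : ∀ i j (t : ℝ), HasDerivAt (F i j) (F i (j+1) t + F (i+1) j t) t := by
    intro i j t
    have h1 := (hd c hc i t).inner ℝ (hd c hc j t)
    have h2 := (hd c' hc' i t).inner ℝ (hd c' hc' j t)
    refine (h1.sub h2).congr_deriv ?_
    simp only [hF]; ring
  have hUD : ∀ t ∈ I, UniqueDiffWithinAt ℝ I t := by
    intro t ht
    refine uniqueDiffWithinAt_convex hI.convex ?_ (subset_closure ht)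
    refine ⟨a + (b - a)/2, ?_⟩
    have : Ioo a b ⊆ interior I :=
      interior_maximal (fun x hx => hI.out ha hb ⟨hx.1.le, hx.2.le⟩) isOpen_Ioo
    exact this ⟨by linarith, by linarith⟩
  have hsymm : ∀ i j t, F i j t = F j i t := by
    intro i j t; simp only [hF, real_inner_comm]
  have hstep : ∀ i j, (∀ t ∈ I, F i j t = 0) → ∀ t ∈ I, F i (j+1) t + F (i+1) j t = 0 := by
    intro i j h0 t ht
    have h1 : HasDerivWithinAt (F i j) (F i (j+1) t + F (i+1) j t) I t :=
      (hder i j t).hasDerivWithinAt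
    have h2 : HasDerivWithinAt (F i j) 0 I t :=
      (hasDerivWithinAt_const t I (0:ℝ)).congr (fun s hs => h0 s hs) (h0 t ht)
    calc F i (j+1) t + F (i+1) j t = derivWithin (F i j) I t :=
          (h1.derivWithin (hUD t ht)).symm
      _ = 0 := h2.derivWithin (hUD t ht)
  have key : ∀ d : ℕ, ∀ i : ℕ, 1 ≤ i → i + d ≤ n + 1 → (d = 0 → i ≤ n) →
      ∀ t ∈ I, F i (i + d) t = 0 := by
    intro d
    induction d using Nat.strong_induction_on with
    | _ d IH =>
      intro i hi1 hin hd0 t ht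
      match d with
      | 0 =>
        have hk := hnorm t ht i hi1 (hd0 rfl)
        simp only [hF, Nat.add_zero]
        rw [real_inner_self_eq_norm_mul_norm, real_inner_self_eq_norm_mul_norm, hk]
        ring
      | (e+1) =>
        have hprev : ∀ s ∈ I, F i (i + e) s = 0 := by
          refine IH e (Nat.lt_succ_self e) i hi1 (by omega) (fun h => by omega)
        have h2 := hstep i (i + e) hprev t ht
        match e with
        | 0 =>
          have hs := hsymm (i+1) i t
          simp only [Nat.add_zero] at h2
          have : F i (i + 1) t = 0 := by linarith
          exact this
        | (e'+1) =>
          have hmid : F (i+1) (i + (e'+1)) t = 0 := by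
            have := IH e' (by omega) (i+1) (by omega) (by omega) (fun h => by omega) t ht
            rw [show i + 1 + e' = i + (e' + 1) by ring] at this
            exact this
          have : F i (i + (e'+1) + 1) t = 0 := by linarith
          exact this
  intro i j hi1 hj1 hin hjn hij t ht
  have main : F i j t = 0 := by
    rcases le_total i j with h | h
    · have := key (j - i) i hi1 (by omega) (fun hd => by omega) t ht
      rwa [show i + (j - i) = j by omega] at this
    · have := key (i - j) j hj1 (by omega) (fun hd => by omega) t ht
      rw [show j + (i - j) = i by omega] at this
      rw [hsymm] at this; exact this
  simpa [hF, sub_eq_zero] using main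
open Set Matrix

noncomputable def gramOf {n : ℕ} (e : Fin n → EuclideanSpace ℝ (Fin n)) :
    Matrix (Fin n) (Fin n) ℝ := Matrix.of fun k l => ⟪e k, e l⟫

noncomputable def coeffOf {n : ℕ} (e : Fin n → EuclideanSpace ℝ (Fin n))
    (w : EuclideanSpace ℝ (Fin n)) : Fin n → ℝ :=
  ((gramOf e).det)⁻¹ • ((gramOf e).adjugate *ᵥ (fun k => ⟪e k, w⟫))

lemma gram_det_ne_zero {n : ℕ} {e : Fin n → EuclideanSpace ℝ (Fin n)}
    (he : LinearIndependent ℝ e) : (gramOf e).det ≠ 0 := by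
  have hinj : Function.Injective ((gramOf e).mulVec) := by
    have hker : ∀ x : Fin n → ℝ, (gramOf e) *ᵥ x = 0 → x = 0 := by
      intro x hx
      have hsum : ∑ l, x l * ((gramOf e) *ᵥ x) l = 0 := by rw [hx]; simp
      have hval : ∑ l, x l * ((gramOf e) *ᵥ x) l = ‖∑ k, x k • e k‖^2 := by
        simp only [Matrix.mulVec, dotProduct, gramOf, Matrix.of_apply]
        rw [← real_inner_self_eq_norm_sq]
        conv_rhs => rw [sum_inner]
        refine Finset.sum_congr rfl fun l _ => ?_
        simp only [real_inner_smul_left, inner_sum, real_inner_smul_right, Finset.mul_sum]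
        refine Finset.sum_congr rfl fun k _ => ?_
        ring
      have hzero : ∑ k, x k • e k = 0 := by
        rw [hsum] at hval
        have := (sq_eq_zero_iff.mp hval.symm)
        exact norm_eq_zero.mp this
      funext i
      exact Fintype.linearIndependent_iff.mp he x hzero i
    intro x y hxy
    have h0 : (gramOf e) *ᵥ (x - y) = 0 := by
      rw [Matrix.mulVec_sub, hxy, sub_self]
    exact sub_eq_zero.mp (hker (x - y) h0)
  have : IsUnit (gramOf e) := Matrix.mulVec_injective_iff_isUnit.mp hinj
  exact ((Matrix.isUnit_iff_isUnit_det _).mp this).ne_zero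

lemma coeffOf_spec {n : ℕ} (hn : 0 < n) {e : Fin n → EuclideanSpace ℝ (Fin n)}
    (he : LinearIndependent ℝ e) (w : EuclideanSpace ℝ (Fin n)) :
    w = ∑ k, coeffOf e w k • e k := by
  classical
  haveI : Nonempty (Fin n) := ⟨⟨0, hn⟩⟩
  have hcard : Fintype.card (Fin n) = Module.finrank ℝ (EuclideanSpace ℝ (Fin n)) := by
    simp
  let B := basisOfLinearIndependentOfCardEqFinrank he hcard
  have hBe : ∀ k, B k = e k := fun k => by
    simp [B, coe_basisOfLinearIndependentOfCardEqFinrank]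
  set y : Fin n → ℝ := fun k => B.repr w k with hy
  have hw : w = ∑ k, y k • e k := by
    conv_lhs => rw [← B.sum_repr w]
    exact Finset.sum_congr rfl fun k _ => by rw [hBe]
  have hGy : (gramOf e) *ᵥ y = fun k => ⟪e k, w⟫ := by
    funext l
    rw [hw]
    simp only [Matrix.mulVec, dotProduct, gramOf, Matrix.of_apply]
    rw [inner_sum]
    refine Finset.sum_congr rfl fun k _ => ?_
    rw [real_inner_smul_right]; ring
  have hdet := gram_det_ne_zero he
  have : coeffOf e w = y := by
    rw [coeffOf, ← hGy, Matrix.mulVec_mulVec, Matrix.adjugate_mul]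
    funext k
    simp only [Matrix.smul_mulVec, Matrix.one_mulVec, Pi.smul_apply, smul_eq_mul]
    rw [← mul_assoc, inv_mul_cancel₀ hdet, one_mul]
  rw [this, ← hw]
open Set

lemma exists_isometry_of_gram_eq {n : ℕ} (hn : 0 < n)
    {e e' : Fin n → EuclideanSpace ℝ (Fin n)}
    (he : LinearIndependent ℝ e) (he' : LinearIndependent ℝ e')
    (hg : ∀ i j, ⟪e i, e j⟫ = ⟪e' i, e' j⟫) :
    ∃ A : EuclideanSpace ℝ (Fin n) ≃ₗᵢ[ℝ] EuclideanSpace ℝ (Fin n), ∀ i, A (e i) = e' i := by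
  haveI : Nonempty (Fin n) := ⟨⟨0, hn⟩⟩
  have hcard : Fintype.card (Fin n) = Module.finrank ℝ (EuclideanSpace ℝ (Fin n)) := by simp
  let B := basisOfLinearIndependentOfCardEqFinrank he hcard
  let B' := basisOfLinearIndependentOfCardEqFinrank he' hcard
  have hBe : ∀ k, B k = e k := fun k => by
    simp [B, coe_basisOfLinearIndependentOfCardEqFinrank]
  have hBe' : ∀ k, B' k = e' k := fun k => by
    simp [B', coe_basisOfLinearIndependentOfCardEqFinrank]
  let A0 : EuclideanSpace ℝ (Fin n) ≃ₗ[ℝ] EuclideanSpace ℝ (Fin n) := B.equiv B' (Equiv.refl _)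
  have hA0 : ∀ i, A0 (e i) = e' i := by
    intro i
    rw [← hBe, ← hBe']
    simp [A0, Module.Basis.equiv_apply]
  have hbil : ((innerₗ (EuclideanSpace ℝ (Fin n))).compl₁₂ A0.toLinearMap A0.toLinearMap) = innerₗ (EuclideanSpace ℝ (Fin n)) := by
    apply B.ext; intro i
    apply B.ext; intro j
    simp only [LinearMap.compl₁₂_apply, LinearEquiv.coe_coe]
    rw [hBe, hBe, hA0, hA0]
    show ⟪e' i, e' j⟫ = ⟪e i, e j⟫
    exact (hg i j).symm
  have hip : ∀ x y : EuclideanSpace ℝ (Fin n), ⟪A0 x, A0 y⟫ = ⟪x, y⟫ := by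
    intro x y
    have := LinearMap.congr_fun₂ hbil x y
    simpa using this
  exact ⟨A0.isometryOfInner hip, fun i => by rw [← hA0 i]; rfl⟩
lemma coeff_contOn {n : ℕ} (I : Set ℝ) (c : ℝ → EuclideanSpace ℝ (Fin n))
    (hc : ContDiff ℝ (⊤ : ℕ∞) c)
    (hreg : ∀ t ∈ I, LinearIndependent ℝ (fun i : Fin n => iteratedDeriv (i + 1) c t)) :
    ContinuousOn (fun t => coeffOf (fun i : Fin n => iteratedDeriv (i + 1) c t)
      (iteratedDeriv (n + 1) c t)) I := by
  have hcd : ∀ m : ℕ, Continuous (iteratedDeriv m c) := fun m =>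
    hc.continuous_iteratedDeriv m (by exact_mod_cast le_top)
  have hG : Continuous (fun t => gramOf (fun i : Fin n => iteratedDeriv (i + 1) c t)) := by
    apply continuous_matrix
    intro i j
    exact (hcd (i+1)).inner (hcd (j+1))
  have hbv : Continuous (fun t => (fun k : Fin n =>
      ⟪iteratedDeriv (k+1) c t, iteratedDeriv (n+1) c t⟫)) := by
    apply continuous_pi
    intro k
    exact (hcd (k+1)).inner (hcd (n+1))
  have hdet : ContinuousOn (fun t =>
      ((gramOf (fun i : Fin n => iteratedDeriv (i + 1) c t)).det)⁻¹) I := by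
    apply ContinuousOn.inv₀ (hG.matrix_det).continuousOn
    intro t ht
    exact gram_det_ne_zero (hreg t ht)
  have hmv : Continuous (fun t =>
      (gramOf (fun i : Fin n => iteratedDeriv (i + 1) c t)).adjugate *ᵥ
        (fun k : Fin n => ⟪iteratedDeriv (k+1) c t, iteratedDeriv (n+1) c t⟫)) :=
    (hG.matrix_adjugate).matrix_mulVec hbv
  exact hdet.smul hmv.continuousOn

/-- **Theorem 6.12, claim 1, of the paper.**  Two smooth strongly regular curves in
`ℝⁿ` (`n ≥ 2`) defined on a nontrivial interval whose first `n` iterated derivatives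
have equal norms differ by an isometry of the ambient euclidean space (every isometry
of `EuclideanSpace ℝ (Fin n)` is affine, `g(x) = Ax + b` with `A` a linear isometry). -/
theorem congruent_of_deriv_norms
    (n : ℕ) (hn : 2 ≤ n) (I : Set ℝ) (hI : I.OrdConnected)
    (hInontriv : ∃ a ∈ I, ∃ b ∈ I, a < b)
    (c c' : ℝ → EuclideanSpace ℝ (Fin n))
    (hc : ContDiff ℝ (⊤ : ℕ∞) c) (hc' : ContDiff ℝ (⊤ : ℕ∞) c')
    (hreg : ∀ t ∈ I, LinearIndependent ℝ (fun i : Fin n => iteratedDeriv (i + 1) c t))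
    (hreg' : ∀ t ∈ I, LinearIndependent ℝ (fun i : Fin n => iteratedDeriv (i + 1) c' t))
    (hnorm : ∀ t ∈ I, ∀ k : ℕ, 1 ≤ k → k ≤ n →
      ‖iteratedDeriv k c t‖ = ‖iteratedDeriv k c' t‖) :
    ∃ g : EuclideanSpace ℝ (Fin n) ≃ᵢ EuclideanSpace ℝ (Fin n),
      ∀ t ∈ I, c' t = g (c t) := by
  classical
  obtain ⟨t₀, ht₀, b₀, hb₀, hab⟩ := hInontriv
  have h0n : 0 < n := by omega
  haveI : Nonempty (Fin n) := ⟨⟨0, h0n⟩⟩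
  have hgram := gram_eq n I hI ⟨t₀, ht₀, b₀, hb₀, hab⟩ c c' hc hc' hnorm
  have hFin : ∀ i : Fin n, (i : ℕ) + 1 ≤ n := fun i => i.isLt
  obtain ⟨A, hA⟩ := exists_isometry_of_gram_eq h0n (hreg t₀ ht₀) (hreg' t₀ ht₀)
    (fun i j => hgram (i+1) (j+1) (by omega) (by omega)
      (by have := hFin i; omega) (by have := hFin j; omega)
      (Or.inl (hFin i)) t₀ ht₀)
  set aco : ℝ → Fin n → ℝ := fun t => coeffOf (fun i : Fin n => iteratedDeriv (i + 1) c t)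
    (iteratedDeriv (n + 1) c t) with haco
  have hacont : ContinuousOn aco I := coeff_contOn I c hc hreg
  have hexp : ∀ t ∈ I, iteratedDeriv (n+1) c t = ∑ k, aco t k • iteratedDeriv (k+1) c t :=
    fun t ht => coeffOf_spec h0n (hreg t ht) _
  have hexp' : ∀ t ∈ I, iteratedDeriv (n+1) c' t = ∑ k, aco t k • iteratedDeriv (k+1) c' t := by
    intro t ht
    have h1 := coeffOf_spec h0n (hreg' t ht) (iteratedDeriv (n+1) c' t)
    have hGeq : gramOf (fun i : Fin n => iteratedDeriv (i+1) c' t)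
        = gramOf (fun i : Fin n => iteratedDeriv (i+1) c t) := by
      ext i j
      simp only [gramOf, Matrix.of_apply]
      exact (hgram (i+1) (j+1) (by omega) (by omega)
        (by have := hFin i; omega) (by have := hFin j; omega) (Or.inl (hFin i)) t ht).symm
    have hbveq : (fun k : Fin n => ⟪iteratedDeriv (k+1) c' t, iteratedDeriv (n+1) c' t⟫)
        = fun k : Fin n => ⟪iteratedDeriv (k+1) c t, iteratedDeriv (n+1) c t⟫ := by
      funext k
      exact (hgram (k+1) (n+1) (by omega) (by omega)
        (by have := hFin k; omega) (by omega) (Or.inl (hFin k)) t ht).symm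
    have heq : coeffOf (fun i : Fin n => iteratedDeriv (i+1) c' t) (iteratedDeriv (n+1) c' t)
        = aco t := by
      simp only [coeffOf, hGeq, hbveq, haco]
    rw [heq] at h1
    exact h1
  have hd : ∀ (f : ℝ → EuclideanSpace ℝ (Fin n)), ContDiff ℝ (⊤ : ℕ∞) f → ∀ (k : ℕ) (t : ℝ),
      HasDerivAt (iteratedDeriv k f) (iteratedDeriv (k+1) f t) t := by
    intro f hf k t
    rw [iteratedDeriv_succ]
    exact ((hf.differentiable_iteratedDeriv k
      (by exact_mod_cast lt_top_iff_ne_top.2 (by simp))) t).hasDerivAt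
  have hcd : ∀ (f : ℝ → EuclideanSpace ℝ (Fin n)), ContDiff ℝ (⊤ : ℕ∞) f → ∀ m : ℕ,
      Continuous (iteratedDeriv m f) := fun f hf m =>
    hf.continuous_iteratedDeriv m (by exact_mod_cast le_top)
  set V : ℝ → (Fin n → EuclideanSpace ℝ (Fin n)) :=
    fun t k => A (iteratedDeriv (k+1) c t) - iteratedDeriv (k+1) c' t with hV
  have hVcont : Continuous V := by
    apply continuous_pi
    intro k
    exact (A.continuous.comp (hcd c hc (k+1))).sub (hcd c' hc' (k+1))
  have hAD : ∀ (f : ℝ → EuclideanSpace ℝ (Fin n)) (f' : EuclideanSpace ℝ (Fin n)) (t : ℝ),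
      HasDerivAt f f' t → HasDerivAt (fun s => A (f s)) (A f') t := by
    intro f f' t hf
    exact (A.toContinuousLinearEquiv.toContinuousLinearMap.hasFDerivAt).comp_hasDerivAt t hf
  have hVderiv : ∀ t, HasDerivAt V
      (fun k => A (iteratedDeriv (k+1+1) c t) - iteratedDeriv (k+1+1) c' t) t := by
    intro t
    apply hasDerivAt_pi.2
    intro k
    exact (hAD _ _ t (hd c hc (k+1) t)).sub (hd c' hc' (k+1) t)
  have hVt₀ : V t₀ = 0 := by
    funext k
    show A (iteratedDeriv (k+1) c t₀) - iteratedDeriv (k+1) c' t₀ = 0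
    rw [hA k, sub_self]
  have hVzero : ∀ t ∈ I, V t = 0 := by
    intro t₁ ht₁
    have hJI : uIcc t₀ t₁ ⊆ I := hI.uIcc_subset ht₀ ht₁
    obtain ⟨C, hC⟩ := (isCompact_uIcc).exists_bound_of_continuousOn (hacont.mono hJI)
    set C' := max C 0 with hC'
    have hC'0 : (0:ℝ) ≤ C' := le_max_right _ _
    have hCb : ∀ s ∈ uIcc t₀ t₁, ∀ l, |aco s l| ≤ C' := by
      intro s hs l
      calc |aco s l| = ‖aco s l‖ := rfl
        _ ≤ ‖aco s‖ := norm_le_pi_norm _ l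
        _ ≤ C := hC s hs
        _ ≤ C' := le_max_left _ _
    set K : NNReal := ⟨1 + n * C', by positivity⟩ with hK
    have hKcast : (K : ℝ) = 1 + n * C' := rfl
    set vf : ℝ → (Fin n → EuclideanSpace ℝ (Fin n)) → (Fin n → EuclideanSpace ℝ (Fin n)) :=
      fun s x => if s ∈ uIcc t₀ t₁ then
        (fun k : Fin n => if h : (k:ℕ)+1 < n then x ⟨(k:ℕ)+1, h⟩ else ∑ l, aco s l • x l)
      else 0 with hvf
    have hK1 : (1:ℝ) ≤ K := by
      rw [hKcast]
      nlinarith [hC'0, Nat.cast_nonneg (α := ℝ) n]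
    have hlip : ∀ s, LipschitzOnWith K (vf s) univ := by
      intro s
      apply LipschitzWith.lipschitzOnWith
      apply LipschitzWith.of_dist_le_mul
      intro x y
      have hdnn : (0:ℝ) ≤ (K:ℝ) * dist x y := by positivity
      by_cases hs : s ∈ uIcc t₀ t₁
      · simp only [hvf, if_pos hs]
        rw [dist_pi_le_iff hdnn]
        intro k
        by_cases hk : (k:ℕ)+1 < n
        · simp only [dif_pos hk]
          calc dist (x ⟨(k:ℕ)+1,hk⟩) (y ⟨(k:ℕ)+1,hk⟩) ≤ dist x y := dist_le_pi_dist x y _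
            _ ≤ K * dist x y := by nlinarith [dist_nonneg (x := x) (y := y)]
        · simp only [dif_neg hk]
          rw [dist_eq_norm]
          have hsum : (∑ l, aco s l • x l) - (∑ l, aco s l • y l)
              = ∑ l, aco s l • (x l - y l) := by
            rw [← Finset.sum_sub_distrib]
            exact Finset.sum_congr rfl fun l _ => (smul_sub _ _ _).symm
          rw [hsum]
          calc ‖∑ l, aco s l • (x l - y l)‖ ≤ ∑ l, ‖aco s l • (x l - y l)‖ := norm_sum_le _ _
            _ ≤ ∑ _l : Fin n, C' * dist x y := by
                apply Finset.sum_le_sum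
                intro l _
                rw [norm_smul, Real.norm_eq_abs]
                have h2 : ‖x l - y l‖ ≤ dist x y := by
                  rw [← dist_eq_norm]; exact dist_le_pi_dist x y l
                exact mul_le_mul (hCb s hs l) h2 (norm_nonneg _) hC'0
            _ = n * C' * dist x y := by
                rw [Finset.sum_const, Finset.card_univ, Fintype.card_fin, nsmul_eq_mul]; ring
            _ ≤ K * dist x y := by nlinarith [dist_nonneg (x := x) (y := y)]
      · simp only [hvf, if_neg hs]
        calc dist (0 : Fin n → EuclideanSpace ℝ (Fin n)) 0 = 0 := dist_self _
          _ ≤ K * dist x y := hdnn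
    have hvf0 : ∀ s, vf s 0 = 0 := by
      intro s
      by_cases hs : s ∈ uIcc t₀ t₁
      · simp only [hvf, if_pos hs]
        funext k
        split <;> simp
      · simp only [hvf, if_neg hs]
    have hODE : ∀ s ∈ uIcc t₀ t₁, vf s (V s)
        = fun k : Fin n => A (iteratedDeriv (k+1+1) c s) - iteratedDeriv (k+1+1) c' s := by
      intro s hs
      have hsI : s ∈ I := hJI hs
      funext k
      simp only [hvf, if_pos hs]
      by_cases hk : (k:ℕ)+1 < n
      · rw [dif_pos hk]
      · rw [dif_neg hk]
        have hkn : (k:ℕ)+1+1 = n+1 := by have := hFin k; omega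
        rw [hkn, hexp s hsI, hexp' s hsI, map_sum, ← Finset.sum_sub_distrib]
        refine Finset.sum_congr rfl fun l _ => ?_
        rw [_root_.map_smul, ← smul_sub]
    rcases le_total t₀ t₁ with hle | hle
    · have hicc : uIcc t₀ t₁ = Icc t₀ t₁ := uIcc_of_le hle
      have hf' : ∀ s ∈ Ico t₀ t₁, HasDerivWithinAt V (vf s (V s)) (Ici s) s := by
        intro s hs
        have hsJ : s ∈ uIcc t₀ t₁ := by rw [hicc]; exact Ico_subset_Icc_self hs
        rw [hODE s hsJ]
        exact (hVderiv s).hasDerivWithinAt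
      have hg' : ∀ s ∈ Ico t₀ t₁,
          HasDerivWithinAt (fun _ : ℝ => (0 : Fin n → EuclideanSpace ℝ (Fin n)))
            (vf s ((fun _ : ℝ => (0 : Fin n → EuclideanSpace ℝ (Fin n))) s)) (Ici s) s := by
        intro s _
        rw [hvf0 s]
        exact (hasDerivAt_const s _).hasDerivWithinAt
      have := ODE_solution_unique_of_mem_Icc_right (v := vf)
        (s := fun _ => (univ : Set (Fin n → EuclideanSpace ℝ (Fin n))))
        (fun s _ => hlip s) hVcont.continuousOn hf' (fun _ _ => mem_univ _)
        continuousOn_const hg' (fun _ _ => mem_univ _) hVt₀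
      exact this ⟨hle, le_refl t₁⟩
    · have hicc : uIcc t₀ t₁ = Icc t₁ t₀ := uIcc_of_ge hle
      have hf' : ∀ s ∈ Ioc t₁ t₀, HasDerivWithinAt V (vf s (V s)) (Iic s) s := by
        intro s hs
        have hsJ : s ∈ uIcc t₀ t₁ := by rw [hicc]; exact Ioc_subset_Icc_self hs
        rw [hODE s hsJ]
        exact (hVderiv s).hasDerivWithinAt
      have hg' : ∀ s ∈ Ioc t₁ t₀,
          HasDerivWithinAt (fun _ : ℝ => (0 : Fin n → EuclideanSpace ℝ (Fin n)))
            (vf s ((fun _ : ℝ => (0 : Fin n → EuclideanSpace ℝ (Fin n))) s)) (Iic s) s := by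
        intro s _
        rw [hvf0 s]
        exact (hasDerivAt_const s _).hasDerivWithinAt
      have := ODE_solution_unique_of_mem_Icc_left (v := vf)
        (s := fun _ => (univ : Set (Fin n → EuclideanSpace ℝ (Fin n))))
        (fun s _ => hlip s) hVcont.continuousOn hf' (fun _ _ => mem_univ _)
        continuousOn_const hg' (fun _ _ => mem_univ _) hVt₀
      exact this ⟨le_refl t₁, hle⟩
  -- from V = 0 get first derivatives related
  have hd1 : ∀ t ∈ I, A (deriv c t) = deriv c' t := by
    intro t ht
    have h := congrFun (hVzero t ht) ⟨0, h0n⟩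
    have h2 : A (iteratedDeriv 1 c t) - iteratedDeriv 1 c' t = 0 := h
    rw [iteratedDeriv_one, iteratedDeriv_one] at h2
    exact sub_eq_zero.mp h2
  have hφ : ∀ t ∈ I, A (c t) - c' t = A (c t₀) - c' t₀ := by
    intro t ht
    have hder : ∀ x ∈ I, HasDerivWithinAt (fun s => A (c s) - c' s)
        ((fun _ => (0 : EuclideanSpace ℝ (Fin n))) x) I x := by
      intro x hx
      have h1 : HasDerivAt (fun s => A (c s) - c' s) (A (deriv c x) - deriv c' x) x := by
        refine ((hAD c (deriv c x) x ?_).sub ?_)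
        · exact ((hc.differentiable (by simp)) x).hasDerivAt
        · exact ((hc'.differentiable (by simp)) x).hasDerivAt
      rw [show A (deriv c x) - deriv c' x = 0 by rw [hd1 x hx, sub_self]] at h1
      exact h1.hasDerivWithinAt
    have key := hI.convex.norm_image_sub_le_of_norm_hasDerivWithin_le (C := 0) hder
      (fun x _ => by simp) ht₀ ht
    rw [zero_mul] at key
    have : (fun s => A (c s) - c' s) t - (fun s => A (c s) - c' s) t₀ = 0 :=
      norm_le_zero_iff.mp key
    have := sub_eq_zero.mp this
    simpa using this
  refine ⟨(A.toIsometryEquiv).trans (IsometryEquiv.addRight (c' t₀ - A (c t₀))), ?_⟩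
  intro t ht
  have h := hφ t ht
  have : c' t = A (c t) + (c' t₀ - A (c t₀)) := by
    have h2 : A (c t) - c' t = A (c t₀) - c' t₀ := h
    calc c' t = A (c t) - (A (c t) - c' t) := by abel
      _ = A (c t) - (A (c t₀) - c' t₀) := by rw [h2]
      _ = A (c t) + (c' t₀ - A (c t₀)) := by abel
  rw [this]
  simp [IsometryEquiv.trans_apply, LinearIsometryEquiv.coe_toIsometryEquiv]
end

section
/- Let n ≥ 2 and let c, c̃ : ℝ → EuclideanSpace ℝ (Fin n) be smooth strongly regular curves defined on a nontrivial interval I. Suppose that for every t ∈ I and every 1 ≤ k ≤ n, ‖c^{(k)}(t)‖ = ‖c̃^{(k)}(t)‖, and moreover the signs agree: sgn(c) = sgn(c̃), where sgn(c) ∈ {1, −1} is the (constant) sign of det(c'(t),…,c^{(n)}(t)). Then there exists an orientation preserving isometry g of EuclideanSpace ℝ (Fin n) (i.e. g(x) = Ax + b with A a linear isometry of determinant 1) such that c̃(t) = g(c(t)) for all t ∈ I. -/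
open scoped RealInnerProductSpace

open Set


variable {n : ℕ}


lemma hasDerivAt_iteratedDeriv {c : ℝ → EuclideanSpace ℝ (Fin n)} (hc : ContDiff ℝ (⊤ : ℕ∞) c) (k : ℕ) (t : ℝ) :
    HasDerivAt (iteratedDeriv k c) (iteratedDeriv (k+1) c t) t := by
  have h1 : Differentiable ℝ (iteratedDeriv k c) :=
    hc.differentiable_iteratedDeriv k (by exact_mod_cast WithTop.coe_lt_top _)
  rw [iteratedDeriv_succ]
  exact (h1 t).hasDerivAt

lemma continuous_iteratedDeriv' {c : ℝ → EuclideanSpace ℝ (Fin n)} (hc : ContDiff ℝ (⊤ : ℕ∞) c) (k : ℕ) :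
    Continuous (iteratedDeriv k c) :=
  hc.continuous_iteratedDeriv k (by exact_mod_cast le_top)

/-- derivative of the inner product of two iterated derivatives -/
lemma hasDerivAt_inner_iteratedDeriv {c c' : ℝ → EuclideanSpace ℝ (Fin n)} (hc : ContDiff ℝ (⊤ : ℕ∞) c)
    (hc' : ContDiff ℝ (⊤ : ℕ∞) c') (i j : ℕ) (t : ℝ) :
    HasDerivAt (fun s => ⟪iteratedDeriv i c s, iteratedDeriv j c' s⟫)
      (⟪iteratedDeriv i c t, iteratedDeriv (j+1) c' t⟫
        + ⟪iteratedDeriv (i+1) c t, iteratedDeriv j c' t⟫) t :=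
  (hasDerivAt_iteratedDeriv hc i t).inner ℝ (hasDerivAt_iteratedDeriv hc' j t)

/-- If a differentiable function vanishes on an order-connected set containing two
distinct points, its derivative vanishes there too. -/
lemma deriv_eq_zero_on_of_eq_zero_on {I : Set ℝ} (hI : I.OrdConnected)
    {a b : ℝ} (ha : a ∈ I) (hb : b ∈ I) (hab : a < b)
    {g : ℝ → ℝ} (hg : Differentiable ℝ g) (h0 : ∀ t ∈ I, g t = 0) :
    ∀ t ∈ I, deriv g t = 0 := by
  intro t ht
  rcases lt_or_ge t b with h | h
  · have hsub : Icc t b ⊆ I := hI.out ht hb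
    have hu : UniqueDiffWithinAt ℝ (Icc t b) t :=
      (uniqueDiffOn_Icc h) t (left_mem_Icc.2 h.le)
    have h1 : HasDerivWithinAt g 0 (Icc t b) t :=
      (hasDerivWithinAt_const t (Icc t b) 0).congr
        (fun y hy => h0 y (hsub hy)) (h0 t ht)
    rw [← (hg t).derivWithin hu, h1.derivWithin hu]
  · have hat : a < t := lt_of_lt_of_le hab h
    have hsub : Icc a t ⊆ I := hI.out ha ht
    have hu : UniqueDiffWithinAt ℝ (Icc a t) t :=
      (uniqueDiffOn_Icc hat) t (right_mem_Icc.2 hat.le)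
    have h1 : HasDerivWithinAt g 0 (Icc a t) t :=
      (hasDerivWithinAt_const t (Icc a t) 0).congr
        (fun y hy => h0 y (hsub hy)) (h0 t ht)
    rw [← (hg t).derivWithin hu, h1.derivWithin hu]

variable {n : ℕ}


lemma gram_key {I : Set ℝ} (hI : I.OrdConnected)
    {a b : ℝ} (ha : a ∈ I) (hb : b ∈ I) (hab : a < b)
    {c c' : ℝ → EuclideanSpace ℝ (Fin n)} (hc : ContDiff ℝ (⊤ : ℕ∞) c) (hc' : ContDiff ℝ (⊤ : ℕ∞) c')
    (hnorm : ∀ t ∈ I, ∀ k : ℕ, 1 ≤ k → k ≤ n →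
      ‖iteratedDeriv k c t‖ = ‖iteratedDeriv k c' t‖) :
    ∀ d i : ℕ, 1 ≤ i → i ≤ n → i + d ≤ n + 1 → ∀ t ∈ I,
      ⟪iteratedDeriv i c t, iteratedDeriv (i+d) c t⟫
        = ⟪iteratedDeriv i c' t, iteratedDeriv (i+d) c' t⟫ := by
  set F : ℕ → ℕ → ℝ → ℝ := fun i j t =>
    ⟪iteratedDeriv i c t, iteratedDeriv j c t⟫
      - ⟪iteratedDeriv i c' t, iteratedDeriv j c' t⟫ with hFdef
  have hF : ∀ (i j : ℕ) (t : ℝ),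
      HasDerivAt (F i j) (F i (j+1) t + F (i+1) j t) t := by
    intro i j t
    have h1 := hasDerivAt_inner_iteratedDeriv hc hc i j t
    have h2 := hasDerivAt_inner_iteratedDeriv hc' hc' i j t
    have : HasDerivAt (F i j) _ t := h1.sub h2
    convert this using 1
    simp only [hFdef]
    ring
  have hFdiff : ∀ i j : ℕ, Differentiable ℝ (F i j) :=
    fun i j => fun t => (hF i j t).differentiableAt
  have hstep : ∀ i j : ℕ, (∀ t ∈ I, F i j t = 0) →
      ∀ t ∈ I, F i (j+1) t + F (i+1) j t = 0 := by
    intro i j h0 t ht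
    have := deriv_eq_zero_on_of_eq_zero_on hI ha hb hab (hFdiff i j) h0 t ht
    rwa [(hF i j t).deriv] at this
  have hsymm : ∀ i j t, F i j t = F j i t := by
    intro i j t
    simp only [hFdef, real_inner_comm]
  suffices H : ∀ d i : ℕ, 1 ≤ i → i ≤ n → i + d ≤ n + 1 → ∀ t ∈ I, F i (i+d) t = 0 by
    intro d i h1 h2 h3 t ht
    have := H d i h1 h2 h3 t ht
    simp only [hFdef] at this
    linarith
  intro d
  induction d using Nat.strong_induction_on with
  | _ d IH =>
    match d with
    | 0 =>
      intro i h1 h2 _ t ht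
      simp only [hFdef, Nat.add_zero, real_inner_self_eq_norm_sq, sub_eq_zero]
      rw [hnorm t ht i h1 h2]
    | 1 =>
      intro i h1 h2 h3 t ht
      have h0 : ∀ t ∈ I, F i (i+0) t = 0 := IH 0 (by norm_num) i h1 h2 (by omega)
      have := hstep i i (by simpa using h0) t ht
      have hs := hsymm (i+1) i t
      have : F i (i+1) t + F i (i+1) t = 0 := by
        rw [hs] at this; linarith
      linarith
    | (d+2) =>
      intro i h1 h2 h3 t ht
      have h0 : ∀ t ∈ I, F i (i+(d+1)) t = 0 :=
        IH (d+1) (by omega) i h1 h2 (by omega)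
      have hst := hstep i (i+(d+1)) h0 t ht
      have h4 : F (i+1) ((i+1)+d) t = 0 :=
        IH d (by omega) (i+1) (by omega) (by omega) (by omega) t ht
      have he1 : i + (d+1) + 1 = i + (d+2) := by omega
      have he2 : i + (d + 1) = (i+1) + d := by omega
      rw [he1, he2, h4, add_zero] at hst
      exact hst



/-- matrix whose columns are the coordinates of the first `n` derivatives -/
noncomputable def mmat (n : ℕ) (c : ℝ → EuclideanSpace ℝ (Fin n)) (t : ℝ) :
    Matrix (Fin n) (Fin n) ℝ :=
  Matrix.of fun i j => iteratedDeriv (j + 1) c t i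

/-- Gram matrix of the first `n` derivatives -/
noncomputable def gmat (n : ℕ) (c : ℝ → EuclideanSpace ℝ (Fin n)) (t : ℝ) :
    Matrix (Fin n) (Fin n) ℝ :=
  Matrix.of fun i j => ⟪iteratedDeriv (i + 1) c t, iteratedDeriv (j + 1) c t⟫

noncomputable def bvec (n : ℕ) (c : ℝ → EuclideanSpace ℝ (Fin n)) (t : ℝ) :
    Fin n → ℝ :=
  fun i => ⟪iteratedDeriv (i + 1) c t, iteratedDeriv (n + 1) c t⟫

/-- the coefficients of `c⁽ⁿ⁺¹⁾` in terms of `c⁽¹⁾,…,c⁽ⁿ⁾` -/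
noncomputable def avec (n : ℕ) (c : ℝ → EuclideanSpace ℝ (Fin n)) (t : ℝ) :
    Fin n → ℝ :=
  (gmat n c t).det⁻¹ • (gmat n c t).adjugate.mulVec (bvec n c t)

lemma mmat_isUnit {c : ℝ → EuclideanSpace ℝ (Fin n)} {t : ℝ}
    (h : LinearIndependent ℝ (fun i : Fin n => iteratedDeriv (i + 1) c t)) :
    IsUnit (mmat n c t) := by
  rw [← Matrix.linearIndependent_cols_iff_isUnit]
  let e := (WithLp.linearEquiv 2 ℝ (Fin n → ℝ))
  have := h.map' e.toLinearMap (by simp [LinearEquiv.ker])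
  exact this

lemma gmat_eq (c : ℝ → EuclideanSpace ℝ (Fin n)) (t : ℝ) :
    gmat n c t = (mmat n c t).transpose * mmat n c t := by
  ext i j
  simp only [gmat, mmat, Matrix.mul_apply, Matrix.transpose_apply, Matrix.of_apply,
    PiLp.inner_apply, RCLike.inner_apply, conj_trivial]
  exact Finset.sum_congr rfl fun _ _ => mul_comm _ _

lemma gmat_det_ne_zero {c : ℝ → EuclideanSpace ℝ (Fin n)} {t : ℝ}
    (h : LinearIndependent ℝ (fun i : Fin n => iteratedDeriv (i + 1) c t)) :
    (gmat n c t).det ≠ 0 := by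
  rw [gmat_eq c t, Matrix.det_mul, Matrix.det_transpose]
  have := (Matrix.isUnit_iff_isUnit_det _).mp (mmat_isUnit h)
  exact mul_ne_zero (IsUnit.ne_zero this) (IsUnit.ne_zero this)

lemma avec_spec {c : ℝ → EuclideanSpace ℝ (Fin n)} {t : ℝ}
    (h : LinearIndependent ℝ (fun i : Fin n => iteratedDeriv (i + 1) c t)) :
    iteratedDeriv (n + 1) c t = ∑ j : Fin n, avec n c t j • iteratedDeriv (j + 1) c t := by
  have hcard : Fintype.card (Fin n) = Module.finrank ℝ (EuclideanSpace ℝ (Fin n)) := by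
    simp
  rcases Nat.eq_zero_or_pos n with hn | hn
  · subst hn
    apply Subsingleton.elim
  have : Nonempty (Fin n) := ⟨⟨0, hn⟩⟩
  let bas := basisOfLinearIndependentOfCardEqFinrank h hcard
  set x : Fin n → ℝ := fun j => bas.repr (iteratedDeriv (n + 1) c t) j with hx
  have hrepr : iteratedDeriv (n + 1) c t = ∑ j : Fin n, x j • iteratedDeriv (j + 1) c t := by
    conv_lhs => rw [← bas.sum_repr (iteratedDeriv (n + 1) c t)]
    refine Finset.sum_congr rfl fun j _ => ?_
    rw [coe_basisOfLinearIndependentOfCardEqFinrank]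
  have hGx : (gmat n c t).mulVec x = bvec n c t := by
    funext i
    rw [Matrix.mulVec, dotProduct]
    simp only [gmat, Matrix.of_apply, bvec]
    rw [hrepr, inner_sum]
    refine Finset.sum_congr rfl fun j _ => ?_
    rw [real_inner_smul_right]
    ring
  have hdet := gmat_det_ne_zero h
  have havec : avec n c t = x := by
    rw [avec, ← hGx, Matrix.mulVec_mulVec, Matrix.adjugate_mul, Matrix.smul_mulVec,
      Matrix.one_mulVec, smul_smul, inv_mul_cancel₀ hdet, one_smul]
  rw [havec, ← hrepr]

lemma avec_congr {c c' : ℝ → EuclideanSpace ℝ (Fin n)} {t : ℝ}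
    (hg : gmat n c t = gmat n c' t) (hb : bvec n c t = bvec n c' t) :
    avec n c t = avec n c' t := by
  rw [avec, avec, hg, hb]

lemma continuousOn_avec {c : ℝ → EuclideanSpace ℝ (Fin n)} {I : Set ℝ} (hc : ContDiff ℝ (⊤ : ℕ∞) c)
    (hreg : ∀ t ∈ I, LinearIndependent ℝ (fun i : Fin n => iteratedDeriv (i + 1) c t)) :
    ContinuousOn (avec n c) I := by
  have hgm : Continuous (gmat n c) := by
    apply continuous_matrix
    intro i j
    exact Continuous.inner
      ((continuous_iteratedDeriv' hc (i + 1))) ((continuous_iteratedDeriv' hc (j + 1)))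
  have hbv : Continuous (bvec n c) := by
    apply continuous_pi
    intro i
    exact Continuous.inner
      ((continuous_iteratedDeriv' hc (i + 1))) ((continuous_iteratedDeriv' hc (n + 1)))
  have hdet : ContinuousOn (fun t => ((gmat n c t).det)⁻¹) I :=
    (hgm.matrix_det.continuousOn).inv₀ fun t ht => gmat_det_ne_zero (hreg t ht)
  exact hdet.smul ((hgm.matrix_adjugate.matrix_mulVec hbv).continuousOn)
lemma ode_frame {n : ℕ} {I : Set ℝ} (hI : I.OrdConnected)
    {t₀ : ℝ} (ht₀ : t₀ ∈ I)
    {c c' : ℝ → EuclideanSpace ℝ (Fin n)} (hc : ContDiff ℝ (⊤ : ℕ∞) c) (hc' : ContDiff ℝ (⊤ : ℕ∞) c')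
    (hreg : ∀ t ∈ I, LinearIndependent ℝ (fun i : Fin n => iteratedDeriv (i + 1) c t))
    (hreg' : ∀ t ∈ I, LinearIndependent ℝ (fun i : Fin n => iteratedDeriv (i + 1) c' t))
    (hgram : ∀ t ∈ I, gmat n c t = gmat n c' t)
    (hbv : ∀ t ∈ I, bvec n c t = bvec n c' t)
    (L : EuclideanSpace ℝ (Fin n) →L[ℝ] EuclideanSpace ℝ (Fin n))
    (hL0 : ∀ i : Fin n, L (iteratedDeriv (i + 1) c t₀) = iteratedDeriv (i + 1) c' t₀) :
    ∀ t ∈ I, ∀ i : Fin n, L (iteratedDeriv (i + 1) c t) = iteratedDeriv (i + 1) c' t := by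
  intro t ht
  set l := min t₀ t with hl
  set u := max t₀ t with hu
  have hlu : l ≤ u := min_le_max
  have hlI : l ∈ I := by
    rcases min_cases t₀ t with ⟨h, _⟩ | ⟨h, _⟩ <;> rw [hl, h] <;> assumption
  have huI : u ∈ I := by
    rcases max_cases t₀ t with ⟨h, _⟩ | ⟨h, _⟩ <;> rw [hu, h] <;> assumption
  have hsub : Icc l u ⊆ I := hI.out hlI huI
  set π : ℝ → ℝ := fun s => max l (min s u) with hπ
  have hπmem : ∀ s, π s ∈ Icc l u := fun s =>
    ⟨le_max_left _ _, max_le hlu (min_le_right _ _)⟩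
  have hπid : ∀ s ∈ Icc l u, π s = s := by
    intro s hs
    rw [hπ]
    simp only [min_eq_left hs.2, max_eq_right hs.1]
  have hπcont : Continuous π := continuous_const.max (continuous_id.min continuous_const)
  have hacont : ContinuousOn (avec n c) I := continuousOn_avec hc hreg
  obtain ⟨C, hC⟩ := (isCompact_Icc (a := l) (b := u)).exists_bound_of_continuousOn
    (hacont.mono hsub)
  set C0 := max C 0 with hC0
  have hC0nn : 0 ≤ C0 := le_max_right _ _
  have hCb : ∀ s : ℝ, ∀ j : Fin n, |avec n c (π s) j| ≤ C0 := by
    intro s j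
    calc |avec n c (π s) j| ≤ ‖avec n c (π s)‖ := by
          simpa [Real.norm_eq_abs] using norm_le_pi_norm (avec n c (π s)) j
      _ ≤ C := hC _ (hπmem s)
      _ ≤ C0 := le_max_left _ _
  set K : NNReal := ⟨1 + n * C0, by positivity⟩ with hK
  have hKcoe : (K : ℝ) = 1 + n * C0 := rfl
  set v : ℝ → (Fin n → EuclideanSpace ℝ (Fin n)) → (Fin n → EuclideanSpace ℝ (Fin n)) :=
    fun s y i => if h : (i : ℕ) + 1 < n then y ⟨(i : ℕ) + 1, h⟩
      else ∑ j : Fin n, avec n c (π s) j • y j with hv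
  have hlip : ∀ s, LipschitzWith K (v s) := by
    intro s
    apply LipschitzWith.of_dist_le_mul
    intro y z
    rw [dist_pi_le_iff (by positivity)]
    intro i
    by_cases h : (i : ℕ) + 1 < n
    · simp only [hv, dif_pos h]
      calc dist (y ⟨(i : ℕ) + 1, h⟩) (z ⟨(i : ℕ) + 1, h⟩) ≤ dist y z :=
            dist_le_pi_dist y z _
        _ ≤ K * dist y z := by
            rw [hKcoe]
            nlinarith [dist_nonneg (x := y) (y := z), mul_nonneg (Nat.cast_nonneg (α := ℝ) n) hC0nn]
    · simp only [hv, dif_neg h]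
      rw [dist_eq_norm, ← Finset.sum_sub_distrib]
      calc ‖∑ j : Fin n, (avec n c (π s) j • y j - avec n c (π s) j • z j)‖
          ≤ ∑ j : Fin n, ‖avec n c (π s) j • y j - avec n c (π s) j • z j‖ :=
            norm_sum_le _ _
        _ = ∑ j : Fin n, |avec n c (π s) j| * ‖y j - z j‖ := by
            simp [← smul_sub, norm_smul, Real.norm_eq_abs]
        _ ≤ ∑ _j : Fin n, C0 * dist y z := by
            refine Finset.sum_le_sum fun j _ => ?_
            have h1 := hCb s j
            have h2 : ‖y j - z j‖ ≤ dist y z := by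
              rw [← dist_eq_norm]; exact dist_le_pi_dist y z j
            have := abs_nonneg (avec n c (π s) j)
            nlinarith [norm_nonneg (y j - z j), dist_nonneg (x := y) (y := z)]
        _ = (n : ℝ) * C0 * dist y z := by
            rw [Finset.sum_const, Finset.card_univ, Fintype.card_fin, nsmul_eq_mul]; ring
        _ ≤ K * dist y z := by
            rw [hKcoe]
            nlinarith [dist_nonneg (x := y) (y := z)]
  set Y : ℝ → (Fin n → EuclideanSpace ℝ (Fin n)) :=
    fun s i => L (iteratedDeriv ((i : ℕ) + 1) c s) with hY
  set Z : ℝ → (Fin n → EuclideanSpace ℝ (Fin n)) :=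
    fun s i => iteratedDeriv ((i : ℕ) + 1) c' s with hZ
  have hYd : ∀ s ∈ Icc l u, HasDerivAt Y (v s (Y s)) s := by
    intro s hs
    have hsI := hsub hs
    rw [hasDerivAt_pi]
    intro i
    have hbase : HasDerivAt (fun r => L (iteratedDeriv ((i : ℕ) + 1) c r))
        (L (iteratedDeriv ((i : ℕ) + 1 + 1) c s)) s :=
      L.hasFDerivAt.comp_hasDerivAt s (hasDerivAt_iteratedDeriv hc _ s)
    by_cases h : (i : ℕ) + 1 < n
    · have : v s (Y s) i = L (iteratedDeriv ((i : ℕ) + 1 + 1) c s) := by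
        simp only [hv, dif_pos h, hY]
      rw [this]
      exact hbase
    · have hin : (i : ℕ) + 1 = n := by omega
      have : v s (Y s) i = L (iteratedDeriv ((i : ℕ) + 1 + 1) c s) := by
        simp only [hv, dif_neg h, hY]
        rw [hπid s hs, hin, avec_spec (hreg s hsI), map_sum]
        simp only [map_smul]
      rw [this]
      exact hbase
  have hZd : ∀ s ∈ Icc l u, HasDerivAt Z (v s (Z s)) s := by
    intro s hs
    have hsI := hsub hs
    rw [hasDerivAt_pi]
    intro i
    have hbase : HasDerivAt (fun r => iteratedDeriv ((i : ℕ) + 1) c' r)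
        (iteratedDeriv ((i : ℕ) + 1 + 1) c' s) s := hasDerivAt_iteratedDeriv hc' _ s
    by_cases h : (i : ℕ) + 1 < n
    · have : v s (Z s) i = iteratedDeriv ((i : ℕ) + 1 + 1) c' s := by
        simp only [hv, dif_pos h, hZ]
      rw [this]
      exact hbase
    · have hin : (i : ℕ) + 1 = n := by omega
      have : v s (Z s) i = iteratedDeriv ((i : ℕ) + 1 + 1) c' s := by
        simp only [hv, dif_neg h, hZ]
        rw [hπid s hs, hin, avec_congr (hgram s hsI) (hbv s hsI),
          avec_spec (hreg' s hsI)]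
      rw [this]
      exact hbase
  have hY0 : Y t₀ = Z t₀ := funext fun i => hL0 i
  have hYc : ContinuousOn Y (Icc l u) := by
    rw [hY]
    exact (continuous_pi fun i : Fin n =>
      L.continuous.comp (continuous_iteratedDeriv' hc ((i : ℕ) + 1))).continuousOn
  have hZc : ContinuousOn Z (Icc l u) := by
    rw [hZ]
    exact (continuous_pi fun i : Fin n => continuous_iteratedDeriv' hc' ((i : ℕ) + 1)).continuousOn
  have hlipOn : ∀ s, LipschitzOnWith K (v s) (Set.univ) :=
    fun s => (hlip s).lipschitzOnWith
  have key : Y t = Z t := by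
    rcases le_total t₀ t with hle | hle
    · have hl' : l = t₀ := min_eq_left hle
      have hu' : u = t := max_eq_right hle
      have := ODE_solution_unique_of_mem_Icc_right (v := v) (s := fun _ => Set.univ)
        (K := K) (fun s _ => hlipOn s) hYc
        (fun r hr => (hYd r (Ico_subset_Icc_self hr)).hasDerivWithinAt)
        (fun _ _ => Set.mem_univ _) hZc
        (fun r hr => (hZd r (Ico_subset_Icc_self hr)).hasDerivWithinAt)
        (fun _ _ => Set.mem_univ _) (by rw [hl']; exact hY0)
      exact this ⟨min_le_right t₀ t, le_max_right t₀ t⟩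
    · have hl' : l = t := min_eq_right hle
      have hu' : u = t₀ := max_eq_left hle
      have := ODE_solution_unique_of_mem_Icc_left (v := v) (s := fun _ => Set.univ)
        (K := K) (fun s _ => hlipOn s) hYc
        (fun r hr => (hYd r (Ioc_subset_Icc_self hr)).hasDerivWithinAt)
        (fun _ _ => Set.mem_univ _) hZc
        (fun r hr => (hZd r (Ioc_subset_Icc_self hr)).hasDerivWithinAt)
        (fun _ _ => Set.mem_univ _) (by rw [hu']; exact hY0)
      exact this ⟨min_le_right t₀ t, le_max_right t₀ t⟩
  intro i
  exact congrFun key i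

/-- **Theorem 6.12, claim 2, of the paper.**  Two smooth strongly regular curves in
`ℝⁿ` (`n ≥ 2`) defined on a nontrivial interval whose first `n` iterated derivatives
have equal norms and whose signs `sgn = sign det(c',…,c^{(n)})` agree differ by an
orientation preserving isometry `x ↦ Ax + b` (`A` a linear isometry with `det A = 1`). -/
theorem congruent_of_deriv_norms_and_sign
    (n : ℕ) (hn : 2 ≤ n) (I : Set ℝ) (hI : I.OrdConnected)
    (hInontriv : ∃ a ∈ I, ∃ b ∈ I, a < b)
    (c c' : ℝ → EuclideanSpace ℝ (Fin n))
    (hc : ContDiff ℝ (⊤ : ℕ∞) c) (hc' : ContDiff ℝ (⊤ : ℕ∞) c')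
    (hreg : ∀ t ∈ I, LinearIndependent ℝ (fun i : Fin n => iteratedDeriv (i + 1) c t))
    (hreg' : ∀ t ∈ I, LinearIndependent ℝ (fun i : Fin n => iteratedDeriv (i + 1) c' t))
    (hnorm : ∀ t ∈ I, ∀ k : ℕ, 1 ≤ k → k ≤ n →
      ‖iteratedDeriv k c t‖ = ‖iteratedDeriv k c' t‖)
    (hsgn : ∀ t ∈ I,
      Real.sign (detFam n (curveDerivs c t)) = Real.sign (detFam n (curveDerivs c' t))) :
    ∃ A : EuclideanSpace ℝ (Fin n) ≃ₗᵢ[ℝ] EuclideanSpace ℝ (Fin n),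
      LinearMap.det (A.toLinearEquiv : EuclideanSpace ℝ (Fin n) →ₗ[ℝ] EuclideanSpace ℝ (Fin n)) = 1
      ∧ ∃ b : EuclideanSpace ℝ (Fin n), ∀ t ∈ I, c' t = A (c t) + b := by
  obtain ⟨p, hp, q, hq, hpq⟩ := hInontriv
  set t₀ : ℝ := p with ht₀def
  have ht₀ : t₀ ∈ I := hp
  -- Step A : equality of all relevant inner products
  have hGram : ∀ t ∈ I, ∀ i j : ℕ, 1 ≤ i → i ≤ n → 1 ≤ j → j ≤ n + 1 →
      ⟪iteratedDeriv i c t, iteratedDeriv j c t⟫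
        = ⟪iteratedDeriv i c' t, iteratedDeriv j c' t⟫ := by
    intro t ht i j hi1 hin hj1 hjn
    rcases le_total i j with hij | hji
    · have := gram_key hI hp hq hpq hc hc' hnorm (j - i) i hi1 hin (by omega) t ht
      rwa [Nat.add_sub_cancel' hij] at this
    · have := gram_key hI hp hq hpq hc hc' hnorm (i - j) j hj1 (by omega) (by omega) t ht
      rw [Nat.add_sub_cancel' hji] at this
      exact (real_inner_comm _ _).trans (this.trans (real_inner_comm _ _))
  have hgmat : ∀ t ∈ I, gmat n c t = gmat n c' t := by
    intro t ht
    ext i j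
    exact hGram t ht (i + 1) (j + 1) (by omega) (by omega) (by omega) (by omega)
  have hbvec : ∀ t ∈ I, bvec n c t = bvec n c' t := by
    intro t ht
    funext i
    exact hGram t ht (i + 1) (n + 1) (by omega) (by omega) (by omega) (by omega)
  -- Step B : construct the isometry at time t₀
  have hcard : Fintype.card (Fin n) = Module.finrank ℝ (EuclideanSpace ℝ (Fin n)) := by simp
  have : Nonempty (Fin n) := ⟨⟨0, by omega⟩⟩
  set bas := basisOfLinearIndependentOfCardEqFinrank (hreg t₀ ht₀) hcard with hbas
  set bas' := basisOfLinearIndependentOfCardEqFinrank (hreg' t₀ ht₀) hcard with hbas'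
  have hbasapp : ∀ i : Fin n, bas i = iteratedDeriv (i + 1) c t₀ := by
    intro i; rw [hbas, coe_basisOfLinearIndependentOfCardEqFinrank]
  have hbasapp' : ∀ i : Fin n, bas' i = iteratedDeriv (i + 1) c' t₀ := by
    intro i; rw [hbas', coe_basisOfLinearIndependentOfCardEqFinrank]
  set A₀ : EuclideanSpace ℝ (Fin n) ≃ₗ[ℝ] EuclideanSpace ℝ (Fin n) :=
    bas.equiv bas' (Equiv.refl _) with hA₀def
  have hA₀app : ∀ i : Fin n, A₀ (iteratedDeriv (i + 1) c t₀) = iteratedDeriv (i + 1) c' t₀ := by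
    intro i
    rw [← hbasapp i, ← hbasapp' i, hA₀def, bas.equiv_apply, Equiv.refl_apply]
  have hinner : ∀ x y : EuclideanSpace ℝ (Fin n), ⟪A₀ x, A₀ y⟫ = ⟪x, y⟫ := by
    have hb : ∀ i j : Fin n, ⟪A₀ (bas i), A₀ (bas j)⟫ = ⟪bas i, bas j⟫ := by
      intro i j
      rw [hbasapp i, hbasapp j, hA₀app i, hA₀app j]
      exact (hGram t₀ ht₀ (i + 1) (j + 1) (by omega) (by omega) (by omega) (by omega)).symm
    intro x y
    rw [← bas.sum_repr x, ← bas.sum_repr y]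
    simp only [map_sum, map_smul, sum_inner, inner_sum, real_inner_smul_left,
      real_inner_smul_right]
    refine Finset.sum_congr rfl fun i _ => Finset.sum_congr rfl fun j _ => ?_
    rw [hb j i]
  set A : EuclideanSpace ℝ (Fin n) ≃ₗᵢ[ℝ] EuclideanSpace ℝ (Fin n) :=
    A₀.isometryOfInner hinner with hAdef
  refine ⟨A, ?_, ?_⟩
  · -- determinant 1
    set stdb := (EuclideanSpace.basisFun (Fin n) ℝ).toBasis with hstdb
    set S := LinearMap.toMatrix stdb stdb (A₀ : EuclideanSpace ℝ (Fin n) →ₗ[ℝ] EuclideanSpace ℝ (Fin n)) with hS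
    set M := mmat n c t₀ with hM
    set M' := mmat n c' t₀ with hM'
    have hreprS : ∀ (x : EuclideanSpace ℝ (Fin n)) (k : Fin n), stdb.repr x k = x k := by
      intro x k
      simp [hstdb]
    have hSM : S * M = M' := by
      ext i j
      have hcol : (fun k => M k j) = ⇑(stdb.repr (iteratedDeriv ((j : ℕ) + 1) c t₀)) := by
        funext k
        rw [hreprS]
        rfl
      have h1 : (S * M) i j = S.mulVec (fun k => M k j) i := by
        simp [Matrix.mul_apply, Matrix.mulVec, dotProduct]
      rw [h1, hcol, hS, LinearMap.toMatrix_mulVec_repr]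
      have : (A₀ : EuclideanSpace ℝ (Fin n) →ₗ[ℝ] EuclideanSpace ℝ (Fin n))
          (iteratedDeriv ((j : ℕ) + 1) c t₀) = iteratedDeriv ((j : ℕ) + 1) c' t₀ := hA₀app j
      rw [this, hreprS]
      rfl
    have hdetM : M.det ≠ 0 :=
      ((Matrix.isUnit_iff_isUnit_det _).mp (mmat_isUnit (hreg t₀ ht₀))).ne_zero
    have hdet_mul : S.det * M.det = M'.det := by rw [← Matrix.det_mul, hSM]
    have hSapp : ∀ k i' : Fin n, S k i' = A₀ (stdb i') k := by
      intro k i'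
      rw [hS, LinearMap.toMatrix_apply, hreprS]
      rfl
    have hST : S.transpose * S = 1 := by
      ext i j
      rw [Matrix.mul_apply]
      simp only [Matrix.transpose_apply]
      have : ∑ k : Fin n, S k i * S k j = ⟪A₀ (stdb i), A₀ (stdb j)⟫ := by
        rw [PiLp.inner_apply]
        simp only [RCLike.inner_apply, conj_trivial]
        refine Finset.sum_congr rfl fun k _ => ?_
        rw [hSapp k i, hSapp k j, mul_comm]
      rw [this, hinner]
      rw [hstdb]
      simp only [OrthonormalBasis.coe_toBasis, EuclideanSpace.basisFun_apply]
      rw [EuclideanSpace.inner_single_left]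
      simp [EuclideanSpace.single_apply, Matrix.one_apply, eq_comm]
    have hdetS : S.det * S.det = 1 := by
      have h := congrArg Matrix.det hST
      rwa [Matrix.det_mul, Matrix.det_transpose, Matrix.det_one] at h
    have hdetAS : LinearMap.det
        (A.toLinearEquiv : EuclideanSpace ℝ (Fin n) →ₗ[ℝ] EuclideanSpace ℝ (Fin n)) = S.det := by
      have hAe : A.toLinearEquiv = A₀ := by
        rw [hAdef]
        exact A₀.isometryOfInner_toLinearEquiv hinner
      rw [hAe, hS, LinearMap.det_toMatrix]
    rcases mul_self_eq_one_iff.mp hdetS with h1 | hm1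
    · rw [hdetAS, h1]
    · exfalso
      have hsgn0 := hsgn t₀ ht₀
      have hdetFamc : detFam n (curveDerivs c t₀) = M.det := rfl
      have hdetFamc' : detFam n (curveDerivs c' t₀) = M'.det := rfl
      have hMM : M'.det = -M.det := by rw [← hdet_mul, hm1]; ring
      rw [hdetFamc, hdetFamc', hMM, Real.sign_neg] at hsgn0
      have hne : Real.sign M.det ≠ 0 := fun h0 => hdetM (Real.sign_eq_zero_iff.mp h0)
      have : Real.sign M.det = 0 := by linarith
      exact hne this
  · -- the translation part
    set L : EuclideanSpace ℝ (Fin n) →L[ℝ] EuclideanSpace ℝ (Fin n) :=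
      A.toLinearIsometry.toContinuousLinearMap with hLdef
    have hLapp : ∀ x, L x = A₀ x := fun x => rfl
    have hode := ode_frame hI ht₀ hc hc' hreg hreg' hgmat hbvec L
      (fun i => by rw [hLapp]; exact hA₀app i)
    have hderiv1 : ∀ t ∈ I, L (iteratedDeriv 1 c t) = iteratedDeriv 1 c' t := by
      intro t ht
      have := hode t ht ⟨0, by omega⟩
      simpa using this
    refine ⟨c' t₀ - L (c t₀), ?_⟩
    intro t ht
    set g : ℝ → EuclideanSpace ℝ (Fin n) := fun s => c' s - L (c s) with hg
    have hgd : ∀ s ∈ I, HasDerivAt g 0 s := by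
      intro s hs
      have h1 : HasDerivAt c' (iteratedDeriv 1 c' s) s := by
        have := hasDerivAt_iteratedDeriv hc' 0 s
        simpa [iteratedDeriv_zero] using this
      have h2 : HasDerivAt (fun r => L (c r)) (L (iteratedDeriv 1 c s)) s := by
        have h0 : HasDerivAt c (iteratedDeriv 1 c s) s := by
          have := hasDerivAt_iteratedDeriv hc 0 s
          simpa [iteratedDeriv_zero] using this
        exact L.hasFDerivAt.comp_hasDerivAt s h0
      have h3 := h1.sub h2
      rw [hderiv1 s hs, sub_self] at h3
      exact h3
    have hgc : Continuous g := by
      rw [hg]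
      exact hc'.continuous.sub (L.continuous.comp hc.continuous)
    have hconst : g t = g t₀ := by
      rcases le_total t₀ t with hle | hle
      · have hsub : Set.Icc t₀ t ⊆ I := hI.out ht₀ ht
        exact constant_of_has_deriv_right_zero (hgc.continuousOn)
          (fun x hx => (hgd x (hsub (Ico_subset_Icc_self hx))).hasDerivWithinAt)
          t (right_mem_Icc.2 hle)
      · have hsub : Set.Icc t t₀ ⊆ I := hI.out ht ht₀
        exact (constant_of_has_deriv_right_zero (hgc.continuousOn)
          (fun x hx => (hgd x (hsub (Ico_subset_Icc_self hx))).hasDerivWithinAt)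
          t₀ (right_mem_Icc.2 hle)).symm
    have hAL : ∀ x, A x = L x := fun x => rfl
    rw [hAL]
    have : c' t - L (c t) = c' t₀ - L (c t₀) := hconst
    have := eq_add_of_sub_eq this
    rw [this]
    abel
end
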